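/- arXiv:2106.06423 — 4 statements merged into one kernel-verified Lean document; each statement's English description precedes it below -/
import Mathlib

section
/- Let A and B be finite-dimensional k-algebras over an algebraically closed field k, with complete sets of primitive orthogonal idempotents {e_1^A,...,e_n^A} and {e_1^B,...,e_m^B} respectively. Then the set {e_i^A ⊗ e_j^B : 1 ≤ i ≤ n, 1 ≤ j ≤ m} is a complete set of primitive orthogonal idempotents of the tensor product algebra A ⊗_k B. -/
/-- An idempotent is primitive if it is nonzero and cannot be written as the
sum of two nonzero orthogonal idempotents. -/
def IsPrimitiveIdempotent {R : Type} [Ring R] (e : R) : Prop :=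
  IsIdempotentElem e ∧ e ≠ 0 ∧
    ∀ a b : R, IsIdempotentElem a → IsIdempotentElem b →
      a * b = 0 → b * a = 0 → a + b = e → a = 0 ∨ b = 0

/-- A complete set of primitive orthogonal idempotents: pairwise orthogonal
primitive idempotents summing to `1`. -/
def IsCompleteSetOfPrimitiveOrthogonalIdempotents {R : Type} [Ring R]
    {ι : Type} [Fintype ι] (e : ι → R) : Prop :=
  (∀ i, IsPrimitiveIdempotent (e i)) ∧
    (∀ i j, i ≠ j → e i * e j = 0) ∧ (∑ i, e i = 1)

/-!
If `e` is a primitive idempotent of a finite-dimensional algebra `A` over an algebraically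
closed field `k`, the corner `eAe` has no idempotents besides `0` and `e`. Splitting the minimal
polynomial of an element `s` by Bézout then shows that `s` is a scalar plus a nilpotent, so
`eAe = k·e ⊕ J` with `J` its Jacobson radical, a nilpotent ideal. The corner of `e ⊗ f` in
`A ⊗ B` is the image of `eAe ⊗ fBf = k ⊕ (J_A ⊗ fBf + eAe ⊗ J_B)`, and the second
summand is again a nilpotent two-sided ideal; hence that corner has only the idempotents `0`
and `1`, i.e. `e ⊗ f` is primitive. Orthogonality and completeness follow from
`(a ⊗ b)(a' ⊗ b') = aa' ⊗ bb'`.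
-/

open scoped TensorProduct
open Polynomial

theorem Subsemigroup.mul_mul_mem_corner {R : Type*} [Semigroup R] (e a : R) :
    e * a * e ∈ Subsemigroup.corner e :=
  ⟨a, rfl⟩

namespace IsIdempotentElem

variable {k A : Type*} [CommRing k] [Ring A] [Algebra k A] {e : A} (he : IsIdempotentElem e)

instance : SMul k he.Corner :=
  ⟨fun c x => ⟨c • x.1, by
    obtain ⟨y, hy⟩ := x.2
    exact ⟨c • y, by simp only [← hy, mul_smul_comm, smul_mul_assoc]⟩⟩⟩

instance : Algebra k he.Corner :=
  letI : Module k he.Corner :=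
    Function.Injective.module k ⟨⟨Subtype.val, rfl⟩, fun _ _ => rfl⟩ Subtype.val_injective
      fun _ _ => rfl
  Algebra.ofModule (fun c x y => Subtype.ext (smul_mul_assoc c x.1 y.1))
    (fun c x y => Subtype.ext (mul_smul_comm c x.1 y.1))

end IsIdempotentElem

instance {k A : Type*} [Field k] [Ring A] [Algebra k A] [FiniteDimensional k A] {e : A}
    (he : IsIdempotentElem e) : FiniteDimensional k he.Corner :=
  Module.Finite.of_injective
    ({ toFun := Subtype.val, map_add' := fun _ _ => rfl, map_smul' := fun _ _ => rfl } :
      he.Corner →ₗ[k] A)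
    Subtype.val_injective

theorem isPrimitiveIdempotent_iff_corner {R : Type} [Ring R] {e : R}
    (he : IsIdempotentElem e) :
    IsPrimitiveIdempotent e ↔ e ≠ 0 ∧ ∀ u : he.Corner, IsIdempotentElem u → u = 0 ∨ u = 1 := by
  constructor
  · rintro ⟨-, hne, hprim⟩
    refine ⟨hne, fun u hu => ?_⟩
    obtain ⟨hleft, hright⟩ := (Subsemigroup.mem_corner_iff he).1 u.2
    have hu' : IsIdempotentElem u.1 := congrArg Subtype.val hu.eq
    have hcompl : IsIdempotentElem (e - u.1) := by
      simp only [IsIdempotentElem, sub_mul, mul_sub, he.eq, hleft, hright, hu'.eq]; abel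
    rcases hprim u.1 (e - u.1) hu' hcompl (by rw [mul_sub, hright, hu'.eq, sub_self])
        (by rw [sub_mul, hleft, hu'.eq, sub_self]) (add_sub_cancel u.1 e) with h | h
    · exact .inl (Subtype.ext h)
    · exact .inr (Subtype.ext (sub_eq_zero.1 h).symm)
  · rintro ⟨hne, htriv⟩
    refine ⟨he, hne, fun a b ha hb hab hba hsum => ?_⟩
    have hmem : a ∈ Subsemigroup.corner e := (Subsemigroup.mem_corner_iff he).2
      ⟨by rw [← hsum, add_mul, ha.eq, hba, add_zero],
        by rw [← hsum, mul_add, ha.eq, hab, add_zero]⟩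
    rcases htriv ⟨a, hmem⟩ (Subtype.ext ha.eq) with h | h
    · exact .inl (congrArg Subtype.val h)
    · have hae : a = e := congrArg Subtype.val h
      rw [hae, add_eq_left] at hsum
      exact .inr hsum

section TrivialIdempotents

variable {k R : Type*} [Field k] [Ring R] [Algebra k R]

theorem exists_isNilpotent_sub_algebraMap [IsAlgClosed k] [FiniteDimensional k R]
    (hR : ∀ u : R, IsIdempotentElem u → u = 0 ∨ u = 1) (s : R) :
    ∃ c : k, IsNilpotent (s - algebraMap k R c) := by
  cases subsingleton_or_nontrivial R
  · exact ⟨0, 0, Subsingleton.elim _ _⟩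
  set p := minpoly k s
  have hs : IsIntegral k s := .of_finite k s
  obtain ⟨c, hc⟩ := IsAlgClosed.exists_root p (minpoly.degree_pos hs).ne'
  obtain ⟨q, hpq, hq⟩ := p.exists_eq_pow_rootMultiplicity_mul_and_not_dvd (minpoly.ne_zero hs) c
  set m := p.rootMultiplicity c
  obtain ⟨u, v, huv⟩ := ((irreducible_X_sub_C c).coprime_iff_not_dvd.2 hq).pow_left (m := m)
  -- Bézout turns the factorisation `p = (X - c) ^ m * q` into a pair of complementary idempotents.
  have hsum : aeval s (u * (X - C c) ^ m) + aeval s (v * q) = 1 := by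
    rw [← map_add, huv, map_one]
  have hprod : aeval s (v * q) * aeval s (u * (X - C c) ^ m) = 0 := by
    rw [← map_mul, show v * q * (u * (X - C c) ^ m) = v * u * p by rw [hpq]; ring, map_mul,
      minpoly.aeval, mul_zero]
  have hidem : IsIdempotentElem (aeval s (v * q)) := by
    unfold IsIdempotentElem
    conv_rhs => rw [← mul_one (aeval s (v * q)), ← hsum, mul_add, hprod, zero_add]
  refine ⟨c, m, ?_⟩
  rcases hR _ hidem with h0 | h1
  · rw [h0, add_zero] at hsum
    have hqs : aeval s q = 0 := by
      rw [← mul_one (aeval s q), ← hsum, ← map_mul,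
        show q * (u * (X - C c) ^ m) = u * p by rw [hpq]; ring, map_mul, minpoly.aeval, mul_zero]
    exact absurd ((dvd_iff_isRoot.2 hc).trans (minpoly.dvd k s hqs)) hq
  · calc (s - algebraMap k R c) ^ m = aeval s ((X - C c) ^ m) * aeval s (v * q) := by
          simp [h1]
      _ = 0 := by
          rw [← map_mul, show (X - C c) ^ m * (v * q) = v * p by rw [hpq]; ring, map_mul,
            minpoly.aeval, mul_zero]

theorem Ring.mem_jacobson_of_isNilpotent [IsDedekindFiniteMonoid R]
    (hR : ∀ s : R, ∃ c : k, IsNilpotent (s - algebraMap k R c)) {x : R} (hx : IsNilpotent x) :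
    x ∈ Ring.jacobson R := by
  rw [← Ideal.jacobson_bot, Ideal.mem_jacobson_iff]
  intro y
  suffices hyx : IsNilpotent (y * x) by
    obtain ⟨z, hz⟩ := hyx.isUnit_add_one.exists_left_inv
    exact ⟨z, by rw [Ideal.mem_bot, mul_assoc, ← mul_add_one, hz, sub_self]⟩
  obtain ⟨c, hc⟩ := hR (y * x)
  rcases eq_or_ne c 0 with rfl | hc0
  · simpa using hc
  cases subsingleton_or_nontrivial R
  · exact ⟨0, Subsingleton.elim _ _⟩
  have hunit : IsUnit (y * x) := by
    simpa using hc.isUnit_add_left_of_commute ((isUnit_iff_ne_zero.2 hc0).map (algebraMap k R))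
      ((Algebra.commute_algebraMap_right c (y * x)).sub_left (.refl _))
  exact absurd (isUnit_of_mul_isUnit_right hunit) hx.not_isUnit

end TrivialIdempotents

/-- `R = k ⊕ I` for a nilpotent two-sided ideal `I`: a local algebra with residue field `k`,
or the zero algebra. -/
def IsScalarModNilpotentIdeal (k R : Type*) [CommRing k] [Ring R] [Algebra k R] : Prop :=
  ∃ I : Submodule k R, ⊤ * I ≤ I ∧ I * ⊤ ≤ I ∧ IsNilpotent I ∧
    ∀ x : R, ∃ c : k, x - algebraMap k R c ∈ I

namespace Submodule

theorem isNilpotent_sup {R A : Type*} [CommSemiring R] [Semiring A] [Algebra R A]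
    {I J : Submodule R A} (hIl : ⊤ * I ≤ I) (hIr : I * ⊤ ≤ I) (hI : IsNilpotent I)
    (hJ : IsNilpotent J) : IsNilpotent (I ⊔ J) := by
  have key : ∀ n, (I ⊔ J) ^ (n + 1) ≤ I ⊔ J ^ (n + 1) := by
    intro n
    induction n with
    | zero => simp
    | succ n ih =>
      have hIK (K : Submodule R A) : I * K ≤ I := (mul_le_mul_right le_top I).trans hIr
      have hKI (K : Submodule R A) : K * I ≤ I := (mul_le_mul_left le_top I).trans hIl
      calc (I ⊔ J) ^ (n + 2) ≤ (I ⊔ J ^ (n + 1)) * (I ⊔ J) := by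
            rw [pow_succ]; exact mul_le_mul_left ih _
        _ = I * I ⊔ I * J ⊔ (J ^ (n + 1) * I ⊔ J ^ (n + 2)) := by
            rw [sup_mul, mul_sup, mul_sup, ← pow_succ]
        _ ≤ I ⊔ J ^ (n + 2) :=
            sup_le (sup_le (le_sup_of_le_left (hIK I)) (le_sup_of_le_left (hIK J)))
              (sup_le_sup_right (hKI _) _)
  obtain ⟨s, hs⟩ := hI
  obtain ⟨t, ht⟩ := hJ
  refine ⟨(t + 1) * s, le_bot_iff.1 ?_⟩
  calc (I ⊔ J) ^ ((t + 1) * s) = ((I ⊔ J) ^ (t + 1)) ^ s := pow_mul _ _ _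
    _ ≤ I ^ s := pow_le_pow_left' ((key t).trans (by simp [pow_succ, ht])) s
    _ = ⊥ := hs

variable {k R S : Type*} [CommRing k] [Ring R] [Algebra k R] [Ring S] [Algebra k S]

theorem map₂_mk_mul_le (M M' : Submodule k R) (N N' : Submodule k S) :
    map₂ (TensorProduct.mk k R S) M N * map₂ (TensorProduct.mk k R S) M' N' ≤
      map₂ (TensorProduct.mk k R S) (M * M') (N * N') := by
  rw [map₂_eq_span_image2, map₂_eq_span_image2, span_mul_span, span_le]
  rintro _ ⟨_, ⟨a, ha, b, hb, rfl⟩, _, ⟨a', ha', b', hb', rfl⟩, rfl⟩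
  show a ⊗ₜ b * a' ⊗ₜ b' ∈ _
  rw [Algebra.TensorProduct.tmul_mul_tmul]
  exact apply_mem_map₂ _ (mul_mem_mul ha ha') (mul_mem_mul hb hb')

theorem map₂_mk_pow_le (M : Submodule k R) (N : Submodule k S) (n : ℕ) :
    map₂ (TensorProduct.mk k R S) M N ^ n ≤
      map₂ (TensorProduct.mk k R S) (M ^ n) (N ^ n) := by
  induction n with
  | zero =>
    rw [pow_zero, pow_zero, pow_zero, one_le]
    exact apply_mem_map₂ _ (one_le.1 le_rfl) (one_le.1 le_rfl)
  | succ n ih =>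
    rw [pow_succ, pow_succ, pow_succ]
    exact (mul_le_mul_left ih _).trans (map₂_mk_mul_le _ _ _ _)

theorem top_mul_map₂_mk_le {M : Submodule k R} {N : Submodule k S}
    (hM : ⊤ * M ≤ M) (hN : ⊤ * N ≤ N) :
    ⊤ * map₂ (TensorProduct.mk k R S) M N ≤ map₂ (TensorProduct.mk k R S) M N := by
  rw [← TensorProduct.map₂_mk_top_top_eq_top]
  exact (map₂_mk_mul_le _ _ _ _).trans (map₂_le_map₂ hM hN)

theorem map₂_mk_mul_top_le {M : Submodule k R} {N : Submodule k S}
    (hM : M * ⊤ ≤ M) (hN : N * ⊤ ≤ N) :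
    map₂ (TensorProduct.mk k R S) M N * ⊤ ≤ map₂ (TensorProduct.mk k R S) M N := by
  rw [← TensorProduct.map₂_mk_top_top_eq_top]
  exact (map₂_mk_mul_le _ _ _ _).trans (map₂_le_map₂ hM hN)

end Submodule

namespace IsScalarModNilpotentIdeal

section CommRing

variable {k R S : Type*} [CommRing k] [Ring R] [Algebra k R] [Ring S] [Algebra k S]

theorem tensorProduct (hR : IsScalarModNilpotentIdeal k R) (hS : IsScalarModNilpotentIdeal k S) :
    IsScalarModNilpotentIdeal k (R ⊗[k] S) := by
  obtain ⟨I, hIl, hIr, hI, hRI⟩ := hR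
  obtain ⟨J, hJl, hJr, hJ, hSJ⟩ := hS
  set K₁ := Submodule.map₂ (TensorProduct.mk k R S) I ⊤
  set K₂ := Submodule.map₂ (TensorProduct.mk k R S) ⊤ J
  have hK₁l : ⊤ * K₁ ≤ K₁ := Submodule.top_mul_map₂_mk_le hIl le_top
  have hK₁r : K₁ * ⊤ ≤ K₁ := Submodule.map₂_mk_mul_top_le hIr le_top
  refine ⟨K₁ ⊔ K₂, ?_, ?_, ?_, fun z => ?_⟩
  · rw [Submodule.mul_sup]
    exact sup_le_sup hK₁l (Submodule.top_mul_map₂_mk_le le_top hJl)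
  · rw [Submodule.sup_mul]
    exact sup_le_sup hK₁r (Submodule.map₂_mk_mul_top_le le_top hJr)
  · obtain ⟨s, hs⟩ := hI
    obtain ⟨t, ht⟩ := hJ
    refine Submodule.isNilpotent_sup hK₁l hK₁r ⟨s, le_bot_iff.1 ?_⟩ ⟨t, le_bot_iff.1 ?_⟩
    · exact (Submodule.map₂_mk_pow_le _ _ s).trans (by simp [hs])
    · exact (Submodule.map₂_mk_pow_le _ _ t).trans (by simp [ht])
  induction z using TensorProduct.induction_on with
  | zero => exact ⟨0, by simp⟩
  | tmul x y =>
    obtain ⟨c, hc⟩ := hRI x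
    obtain ⟨d, hd⟩ := hSJ y
    refine ⟨c * d, ?_⟩
    have hsplit : x ⊗ₜ[k] y - algebraMap k (R ⊗[k] S) (c * d) =
        (x - algebraMap k R c) ⊗ₜ y + algebraMap k R c ⊗ₜ (y - algebraMap k S d) := by
      rw [TensorProduct.sub_tmul, TensorProduct.tmul_sub, map_mul,
        Algebra.TensorProduct.algebraMap_apply, Algebra.TensorProduct.algebraMap_apply',
        Algebra.TensorProduct.tmul_mul_tmul, mul_one, one_mul]
      abel
    rw [hsplit]
    exact add_mem (Submodule.mem_sup_left (Submodule.apply_mem_map₂ _ hc Submodule.mem_top))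
      (Submodule.mem_sup_right (Submodule.apply_mem_map₂ _ Submodule.mem_top hd))
  | add z₁ z₂ h₁ h₂ =>
    obtain ⟨c₁, hc₁⟩ := h₁
    obtain ⟨c₂, hc₂⟩ := h₂
    refine ⟨c₁ + c₂, ?_⟩
    rw [map_add, add_sub_add_comm]
    exact add_mem hc₁ hc₂

theorem of_surjective (hR : IsScalarModNilpotentIdeal k R) (f : R →ₐ[k] S)
    (hf : Function.Surjective f) : IsScalarModNilpotentIdeal k S := by
  obtain ⟨I, hIl, hIr, ⟨n, hn⟩, hRI⟩ := hR
  have htop : Submodule.map f.toLinearMap ⊤ = ⊤ := by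
    rw [Submodule.map_top, LinearMap.range_eq_top]
    exact hf
  refine ⟨I.map f.toLinearMap, ?_, ?_, ⟨n, ?_⟩, fun y => ?_⟩
  · rw [← htop, ← Submodule.map_mul]
    exact Submodule.map_mono hIl
  · rw [← htop, ← Submodule.map_mul]
    exact Submodule.map_mono hIr
  · rw [← Submodule.map_pow, hn, Submodule.zero_eq_bot, Submodule.map_bot]
    rfl
  · obtain ⟨x, rfl⟩ := hf y
    obtain ⟨c, hc⟩ := hRI x
    refine ⟨c, ?_⟩
    rw [← f.commutes c, ← map_sub]
    exact Submodule.mem_map_of_mem hc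

end CommRing

section Field

variable {k R : Type*} [Field k] [Ring R] [Algebra k R]

theorem of_isArtinianRing [IsArtinianRing R]
    (hR : ∀ s : R, ∃ c : k, IsNilpotent (s - algebraMap k R c)) :
    IsScalarModNilpotentIdeal k R := by
  obtain ⟨n, hn⟩ := IsSemiprimaryRing.isNilpotent (R := R)
  refine ⟨(Ring.jacobson R).restrictScalars k, Submodule.mul_le.2 fun a _ x hx => ?_,
    Submodule.mul_le.2 fun x hx a _ => ?_, ⟨n + 1, ?_⟩, fun x => ?_⟩
  · exact (Ring.jacobson R).mul_mem_left a hx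
  · exact (Ring.jacobson R).mul_mem_right a hx
  · rw [← Submodule.restrictScalars_pow n.succ_ne_zero, Submodule.pow_succ, hn]
    simp
  · obtain ⟨c, hc⟩ := hR x
    exact ⟨c, Ring.mem_jacobson_of_isNilpotent hR hc⟩

theorem eq_zero_or_one_of_isIdempotentElem (hR : IsScalarModNilpotentIdeal k R) {u : R}
    (hu : IsIdempotentElem u) : u = 0 ∨ u = 1 := by
  obtain ⟨I, hIl, -, ⟨n, hn⟩, hRI⟩ := hR
  have hnil : ∀ x ∈ I, IsNilpotent x := fun x hx =>
    ⟨n, by simpa [hn] using Submodule.pow_mem_pow I hx n⟩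
  obtain ⟨c, hc⟩ := hRI u
  rcases eq_or_ne c 0 with rfl | hc0
  · exact .inl (hu.eq_zero_of_isNilpotent (hnil u (by simpa using hc)))
  have hmul : (1 - u) * (u - algebraMap k R c) = (-c) • (1 - u) := by
    rw [Algebra.smul_def, map_neg, sub_mul, mul_sub, mul_sub, one_mul, one_mul, hu.eq,
      ← Algebra.commutes]
    noncomm_ring
  have hmem : 1 - u ∈ I := by
    have := I.smul_mem (-c)⁻¹ (hIl (Submodule.mul_mem_mul (Submodule.mem_top (x := 1 - u)) hc))
    rwa [hmul, smul_smul, inv_mul_cancel₀ (neg_ne_zero.2 hc0), one_smul] at this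
  exact .inr (sub_eq_zero.1 (hu.one_sub.eq_zero_of_isNilpotent (hnil _ hmem))).symm

theorem iff_isIdempotentElem_eq_zero_or_one [IsAlgClosed k] [FiniteDimensional k R] :
    IsScalarModNilpotentIdeal k R ↔ ∀ u : R, IsIdempotentElem u → u = 0 ∨ u = 1 :=
  ⟨fun hR _ hu => hR.eq_zero_or_one_of_isIdempotentElem hu, fun hR =>
    haveI := IsArtinianRing.of_finite k R
    of_isArtinianRing (exists_isNilpotent_sub_algebraMap hR)⟩

end Field

end IsScalarModNilpotentIdeal

section CornerTensor

variable {k A B : Type*} [CommRing k] [Ring A] [Algebra k A] [Ring B] [Algebra k B]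
  {e : A} {f : B}

theorem IsIdempotentElem.tmul (he : IsIdempotentElem e) (hf : IsIdempotentElem f) :
    IsIdempotentElem (e ⊗ₜ[k] f) := by
  rw [IsIdempotentElem, Algebra.TensorProduct.tmul_mul_tmul, he.eq, hf.eq]

theorem tmul_mem_corner (he : IsIdempotentElem e) (hf : IsIdempotentElem f) {x : A} {y : B}
    (hx : x ∈ Subsemigroup.corner e) (hy : y ∈ Subsemigroup.corner f) :
    x ⊗ₜ[k] y ∈ Subsemigroup.corner (e ⊗ₜ[k] f) := by
  rw [Subsemigroup.mem_corner_iff he] at hx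
  rw [Subsemigroup.mem_corner_iff hf] at hy
  rw [Subsemigroup.mem_corner_iff (he.tmul hf), Algebra.TensorProduct.tmul_mul_tmul,
    Algebra.TensorProduct.tmul_mul_tmul, hx.1, hx.2, hy.1, hy.2]
  exact ⟨rfl, rfl⟩

def cornerTensorHom (he : IsIdempotentElem e) (hf : IsIdempotentElem f) :
    he.Corner ⊗[k] hf.Corner →ₐ[k] (he.tmul (k := k) hf).Corner :=
  Algebra.TensorProduct.lift
    (AlgHom.ofLinearMap
      { toFun x := ⟨x.1 ⊗ₜ f,
          tmul_mem_corner he hf x.2 ((Subsemigroup.mem_corner_iff hf).2 ⟨hf.eq, hf.eq⟩)⟩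
        map_add' x y := Subtype.ext (TensorProduct.add_tmul ..)
        map_smul' c x := Subtype.ext (TensorProduct.smul_tmul' ..).symm }
      rfl fun x y => Subtype.ext (show (x.1 * y.1) ⊗ₜ[k] f = (x.1 ⊗ₜ f) * (y.1 ⊗ₜ f) by
        rw [Algebra.TensorProduct.tmul_mul_tmul, hf.eq]))
    (AlgHom.ofLinearMap
      { toFun y := ⟨e ⊗ₜ y.1,
          tmul_mem_corner he hf ((Subsemigroup.mem_corner_iff he).2 ⟨he.eq, he.eq⟩) y.2⟩
        map_add' x y := Subtype.ext (TensorProduct.tmul_add ..)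
        map_smul' c y := Subtype.ext (TensorProduct.tmul_smul ..) }
      rfl fun x y => Subtype.ext (show e ⊗ₜ[k] (x.1 * y.1) = (e ⊗ₜ x.1) * (e ⊗ₜ y.1) by
        rw [Algebra.TensorProduct.tmul_mul_tmul, he.eq]))
    fun x y => Subtype.ext
      (show (x.1 ⊗ₜ[k] f) * (e ⊗ₜ y.1) = (e ⊗ₜ y.1) * (x.1 ⊗ₜ f) by
        obtain ⟨hx1, hx2⟩ := (Subsemigroup.mem_corner_iff he).1 x.2
        obtain ⟨hy1, hy2⟩ := (Subsemigroup.mem_corner_iff hf).1 y.2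
        rw [Algebra.TensorProduct.tmul_mul_tmul, Algebra.TensorProduct.tmul_mul_tmul, hx1, hx2,
          hy1, hy2])

theorem cornerTensorHom_tmul (he : IsIdempotentElem e) (hf : IsIdempotentElem f)
    (x : he.Corner) (y : hf.Corner) :
    (cornerTensorHom (k := k) he hf (x ⊗ₜ y)).1 = x.1 ⊗ₜ y.1 := by
  obtain ⟨-, hx⟩ := (Subsemigroup.mem_corner_iff he).1 x.2
  obtain ⟨hy, -⟩ := (Subsemigroup.mem_corner_iff hf).1 y.2
  show (x.1 ⊗ₜ[k] f) * (e ⊗ₜ y.1) = _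
  rw [Algebra.TensorProduct.tmul_mul_tmul, hx, hy]

theorem cornerTensorHom_surjective (he : IsIdempotentElem e) (hf : IsIdempotentElem f) :
    Function.Surjective (cornerTensorHom (k := k) he hf) := by
  have hval : ∀ z : A ⊗[k] B,
      ∃ w, (cornerTensorHom he hf w).1 = e ⊗ₜ[k] f * z * e ⊗ₜ[k] f := by
    intro z
    induction z using TensorProduct.induction_on with
    | zero => exact ⟨0, by rw [map_zero, mul_zero, zero_mul]; rfl⟩
    | tmul a b =>
      refine ⟨⟨e * a * e, Subsemigroup.mul_mul_mem_corner e a⟩ ⊗ₜ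
        ⟨f * b * f, Subsemigroup.mul_mul_mem_corner f b⟩,
        (cornerTensorHom_tmul he hf _ _).trans ?_⟩
      show (e * a * e) ⊗ₜ[k] (f * b * f) = _
      rw [Algebra.TensorProduct.tmul_mul_tmul, Algebra.TensorProduct.tmul_mul_tmul]
    | add z₁ z₂ h₁ h₂ =>
      obtain ⟨w₁, hw₁⟩ := h₁
      obtain ⟨w₂, hw₂⟩ := h₂
      refine ⟨w₁ + w₂, ?_⟩
      rw [map_add]
      show (cornerTensorHom he hf w₁).1 + (cornerTensorHom he hf w₂).1 = _
      rw [hw₁, hw₂, mul_add, add_mul]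
  intro w
  obtain ⟨w', hw'⟩ := hval w.1
  obtain ⟨hleft, hright⟩ := (Subsemigroup.mem_corner_iff (he.tmul hf)).1 w.2
  exact ⟨w', Subtype.ext (by rw [hw', hleft, hright])⟩

end CornerTensor

theorem TensorProduct.tmul_ne_zero {k M N : Type*} [Field k] [AddCommGroup M] [Module k M]
    [AddCommGroup N] [Module k N] {m : M} {n : N} (hm : m ≠ 0) (hn : n ≠ 0) :
    m ⊗ₜ[k] n ≠ 0 := by
  obtain ⟨φ, hφ⟩ := Module.Projective.exists_dual_ne_zero k hm
  intro h
  have := congrArg (fun t => TensorProduct.lid k N (φ.rTensor N t)) h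
  simp only [LinearMap.rTensor_tmul, TensorProduct.lid_tmul, map_zero] at this
  exact smul_ne_zero hφ hn this

theorem isPrimitiveIdempotent_tmul {k A B : Type} [Field k] [IsAlgClosed k]
    [Ring A] [Algebra k A] [FiniteDimensional k A] [Ring B] [Algebra k B] [FiniteDimensional k B]
    {e : A} {f : B} (he : IsPrimitiveIdempotent e) (hf : IsPrimitiveIdempotent f) :
    IsPrimitiveIdempotent (e ⊗ₜ[k] f) := by
  have hCe := (IsScalarModNilpotentIdeal.iff_isIdempotentElem_eq_zero_or_one (k := k)).2
    ((isPrimitiveIdempotent_iff_corner he.1).1 he).2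
  have hCf := (IsScalarModNilpotentIdeal.iff_isIdempotentElem_eq_zero_or_one (k := k)).2
    ((isPrimitiveIdempotent_iff_corner hf.1).1 hf).2
  refine (isPrimitiveIdempotent_iff_corner (he.1.tmul hf.1)).2
    ⟨TensorProduct.tmul_ne_zero he.2.1 hf.2.1, ?_⟩
  refine (IsScalarModNilpotentIdeal.iff_isIdempotentElem_eq_zero_or_one (k := k)).1 ?_
  exact (hCe.tensorProduct hCf).of_surjective _ (cornerTensorHom_surjective he.1 hf.1)

theorem stmt0 (k A B : Type) [Field k] [IsAlgClosed k]
    [Ring A] [Algebra k A] [FiniteDimensional k A]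
    [Ring B] [Algebra k B] [FiniteDimensional k B]
    {n m : ℕ} (eA : Fin n → A) (eB : Fin m → B)
    (hA : IsCompleteSetOfPrimitiveOrthogonalIdempotents eA)
    (hB : IsCompleteSetOfPrimitiveOrthogonalIdempotents eB) :
    IsCompleteSetOfPrimitiveOrthogonalIdempotents
      (fun p : Fin n × Fin m => eA p.1 ⊗ₜ[k] eB p.2) := by
  obtain ⟨hAprim, hAorth, hAsum⟩ := hA
  obtain ⟨hBprim, hBorth, hBsum⟩ := hB
  refine ⟨fun p => isPrimitiveIdempotent_tmul (hAprim p.1) (hBprim p.2), ?_, ?_⟩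
  · rintro ⟨i, j⟩ ⟨i', j'⟩ hne
    rw [Algebra.TensorProduct.tmul_mul_tmul]
    rcases eq_or_ne i i' with rfl | hi
    · rw [hBorth j j' fun h => hne (by rw [h]), TensorProduct.tmul_zero]
    · rw [hAorth i i' hi, TensorProduct.zero_tmul]
  · simp_rw [Fintype.sum_prod_type, ← TensorProduct.tmul_sum, hBsum, ← TensorProduct.sum_tmul,
      hAsum]
    rfl
end

section
/- Let A be a τ-tilting finite finite-dimensional k-algebra and e an idempotent of A. Then the idempotent truncation eAe is τ-tilting finite. -/
/-- A brick: a (finite-dimensional) module all of whose nonzero endomorphisms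
are invertible. -/
def IsBrick (A : Type) [Ring A] (M : ModuleCat.{0} A) : Prop :=
  Module.Finite A M ∧ Nontrivial M ∧ ∀ f : M →ₗ[A] M, f ≠ 0 → Function.Bijective f

/-- τ-tilting finiteness, via the Demonet–Iyama–Jasso characterization:
there are only finitely many isomorphism classes of bricks. -/
def IsTauTiltingFinite (A : Type) [Ring A] : Prop :=
  ∃ (n : ℕ) (M : Fin n → ModuleCat.{0} A),
    ∀ N : ModuleCat.{0} A, IsBrick A N → ∃ i, Nonempty (N ≃ₗ[A] M i)

section Corner

variable {A : Type} [Ring A]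

/-- The corner `eAe` of a ring `A` at an element `e`, as an additive subgroup. -/
def cornerAddSubgroup (e : A) : AddSubgroup A where
  carrier := {x | e * x * e = x}
  add_mem' := by
    intro x y hx hy
    simp only [Set.mem_setOf_eq] at *
    rw [mul_add, add_mul, hx, hy]
  zero_mem' := by simp
  neg_mem' := by
    intro x hx
    simp only [Set.mem_setOf_eq] at *
    rw [mul_neg, neg_mul, hx]

/-- The corner `eAe` of a ring `A` at an element `e`. -/
abbrev Corner (e : A) : Type := ↥(cornerAddSubgroup e)

instance {e : A} : AddCommGroup (Corner e) :=
  inferInstanceAs (AddCommGroup (cornerAddSubgroup e))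

variable {e : A}

private lemma Corner.mem (x : Corner e) : e * (x : A) * e = (x : A) := x.2

private lemma Corner.eMul (he : IsIdempotentElem e) (x : Corner e) :
    e * (x : A) = (x : A) := by
  conv_lhs => rw [← Corner.mem x]
  rw [← mul_assoc, ← mul_assoc, he.eq]
  exact Corner.mem x

private lemma Corner.mulE (he : IsIdempotentElem e) (x : Corner e) :
    (x : A) * e = (x : A) := by
  conv_lhs => rw [← Corner.mem x]
  rw [mul_assoc, he.eq]
  exact Corner.mem x

/-- The ring structure on the corner `eAe` (with unit `e`), for an idempotent `e`. -/
def cornerRing (he : IsIdempotentElem e) : Ring (Corner e) :=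
  { (inferInstance : AddCommGroup (Corner e)) with
    mul := fun x y => ⟨(x : A) * y, by
      show e * ((x : A) * y) * e = (x : A) * y
      rw [← mul_assoc e (x : A) y, Corner.eMul he x, mul_assoc, Corner.mulE he y]⟩
    one := ⟨e, by show e * e * e = e; rw [he.eq, he.eq]⟩
    mul_assoc := fun x y z => Subtype.ext (mul_assoc (x : A) y z)
    one_mul := fun x => Subtype.ext (Corner.eMul he x)
    mul_one := fun x => Subtype.ext (Corner.mulE he x)
    left_distrib := fun x y z => Subtype.ext (mul_add (x : A) y z)
    right_distrib := fun x y z => Subtype.ext (add_mul (x : A) y z)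
    zero_mul := fun x => Subtype.ext (zero_mul (x : A))
    mul_zero := fun x => Subtype.ext (mul_zero (x : A)) }

end Corner

/-!
For a brick `N` over `eAe`, let `M` be the `A`-submodule of `Hom_ℤ(A, N)` spanned by the maps
`a ↦ (eae) • n` (the image of `Ae ⊗_{eAe} N → Hom_{eAe}(eA, N)`). Then `eM ≅ N`, `M` is
generated by `eM`, and no nonzero element `x` of `M` has `eAx = 0`. Consequently a nonzero
endomorphism of `M` restricts to a nonzero, hence bijective, endomorphism of `eM ≅ N`, and is
then injective on all of `M`; as `M` has finite length it is bijective. So `M` is a brick over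
`A`, hence isomorphic to one of the finitely many bricks `M_i`, and `N ≅ eM ≅ eM_i`.
-/

lemma IsBrick.of_linearEquiv {R M N : Type} [Ring R] [AddCommGroup M] [Module R M]
    [AddCommGroup N] [Module R N] (u : M ≃ₗ[R] N) (h : IsBrick R (ModuleCat.of R M)) :
    IsBrick R (ModuleCat.of R N) := by
  obtain ⟨hfin, hnt, hend⟩ : Module.Finite R M ∧ Nontrivial M ∧
    ∀ g : M →ₗ[R] M, g ≠ 0 → Function.Bijective g := h
  refine ⟨Module.Finite.equiv u, u.symm.toEquiv.nontrivial, fun f hf => ?_⟩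
  set g : M →ₗ[R] M := u.symm.toLinearMap ∘ₗ f ∘ₗ u.toLinearMap
  have hf_eq : (f : N → N) = u ∘ g ∘ u.symm := by
    ext x
    simp [g]
  have hg : g ≠ 0 := fun hg0 =>
    hf (LinearMap.ext fun x => by simpa [hg0] using congrFun hf_eq x)
  rw [hf_eq]
  exact u.bijective.comp ((hend g hg).comp u.symm.bijective)

section CornerPart

variable {A : Type} [Ring A] {e : A} [Fact (IsIdempotentElem e)]

instance : Ring (Corner e) := cornerRing Fact.out

namespace Corner

@[simp] lemma coe_one : ((1 : Corner e) : A) = e := rfl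

@[simp] lemma coe_mul (x y : Corner e) : ((x * y : Corner e) : A) = x * y := rfl

lemma e_mul_coe (x : Corner e) : e * (x : A) = x := Corner.eMul Fact.out x

lemma coe_mul_e (x : Corner e) : (x : A) * e = x := Corner.mulE Fact.out x

variable (e) in
def proj : A →+ Corner e where
  toFun a := ⟨e * a * e, by
    show e * (e * a * e) * e = e * a * e
    have he : e * e = e := (Fact.out : IsIdempotentElem e).eq
    rw [← mul_assoc, ← mul_assoc, he, mul_assoc, he]⟩
  map_zero' := Subtype.ext (show e * 0 * e = 0 by simp)
  map_add' a b := Subtype.ext (show e * (a + b) * e = e * a * e + e * b * e by noncomm_ring)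

@[simp] lemma coe_proj (a : A) : (proj e a : A) = e * a * e := rfl

lemma proj_e : proj e e = 1 := by
  ext
  simp [(Fact.out : IsIdempotentElem e).eq]

lemma proj_coe_mul (c : Corner e) (a : A) : proj e (c * a) = c * proj e a := by
  ext
  simp only [coe_proj, coe_mul, ← mul_assoc, e_mul_coe, coe_mul_e]

lemma proj_mul_coe (a : A) (c : Corner e) : proj e (a * c) = proj e a * c := by
  ext
  simp only [coe_proj, coe_mul, mul_assoc, e_mul_coe, coe_mul_e]

end Corner

variable (e) in
def cornerPart (V : Type) [AddCommGroup V] [Module A V] : AddSubgroup V where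
  carrier := {m | e • m = m}
  add_mem' {x y} hx hy := by simp_all [smul_add]
  zero_mem' := smul_zero e
  neg_mem' {x} hx := by simp_all [smul_neg]

variable {V W : Type} [AddCommGroup V] [Module A V] [AddCommGroup W] [Module A W]

lemma e_smul_mem_cornerPart (x : V) : e • x ∈ cornerPart e V := by
  show e • e • x = e • x
  rw [← mul_smul, (Fact.out : IsIdempotentElem e).eq]

instance : Module (Corner e) (cornerPart e V) where
  smul c m := ⟨(c : A) • (m : V), by
    show e • (c : A) • (m : V) = (c : A) • (m : V)
    rw [← mul_smul, Corner.e_mul_coe]⟩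
  one_smul m := Subtype.ext m.2
  mul_smul c d m := Subtype.ext (mul_smul (c : A) (d : A) (m : V))
  smul_zero c := Subtype.ext (smul_zero (c : A))
  smul_add c m n := Subtype.ext (smul_add (c : A) (m : V) n)
  add_smul c d m := Subtype.ext (add_smul (c : A) (d : A) (m : V))
  zero_smul m := Subtype.ext (zero_smul A (m : V))

def LinearMap.cornerPartMap (f : V →ₗ[A] W) :
    cornerPart e V →ₗ[Corner e] cornerPart e W where
  toFun m := ⟨f m, by
    show e • f m = f m
    rw [← map_smul, m.2]⟩
  map_add' m n := Subtype.ext (f.map_add m n)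
  map_smul' c m := Subtype.ext (f.map_smul (c : A) m)

def LinearEquiv.cornerPartCongr (u : V ≃ₗ[A] W) :
    cornerPart e V ≃ₗ[Corner e] cornerPart e W :=
  LinearEquiv.ofLinearMap u.toLinearMap.cornerPartMap u.symm.toLinearMap.cornerPartMap
    (by ext m; exact u.apply_symm_apply m)
    (by ext m; exact u.symm_apply_apply m)

lemma LinearMap.eq_zero_of_cornerPartMap_eq_zero
    (hgen : Submodule.span A (Set.range ((↑) : cornerPart e V → V)) = ⊤)
    (f : V →ₗ[A] W) (hf : f.cornerPartMap (e := e) = 0) : f = 0 :=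
  LinearMap.ext_on_range hgen fun m => congrArg Subtype.val (LinearMap.congr_fun hf m)

lemma LinearMap.injective_of_cornerPartMap_injective
    (htors : ∀ x : V, (∀ a : A, e • a • x = 0) → x = 0)
    (f : V →ₗ[A] W) (hf : Function.Injective (f.cornerPartMap (e := e))) :
    Function.Injective f := by
  refine (injective_iff_map_eq_zero f).2 fun x hx => htors x fun a => ?_
  have hpart : f.cornerPartMap ⟨e • a • x, e_smul_mem_cornerPart _⟩ = 0 :=
    Subtype.ext (show f (e • a • x) = 0 by simp [hx])
  exact congrArg Subtype.val ((map_eq_zero_iff _ hf).1 hpart)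

theorem isBrick_of_isBrick_cornerPart [IsArtinianRing A] [Module.Finite A V]
    (hgen : Submodule.span A (Set.range ((↑) : cornerPart e V → V)) = ⊤)
    (htors : ∀ x : V, (∀ a : A, e • a • x = 0) → x = 0)
    (hbrick : IsBrick (Corner e) (ModuleCat.of (Corner e) (cornerPart e V))) :
    IsBrick A (ModuleCat.of A V) := by
  obtain ⟨-, hnt, hend⟩ : Module.Finite (Corner e) (cornerPart e V) ∧
      Nontrivial (cornerPart e V) ∧ ∀ g : cornerPart e V →ₗ[Corner e] cornerPart e V,
        g ≠ 0 → Function.Bijective g := hbrick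
  have : Nontrivial V := Function.Injective.nontrivial (f := ((↑) : cornerPart e V → V))
    Subtype.val_injective
  refine ⟨‹_›, ‹_›, fun f hf => ?_⟩
  have hf_part : f.cornerPartMap ≠ 0 := fun h0 =>
    hf (LinearMap.eq_zero_of_cornerPartMap_eq_zero hgen f h0)
  have hinj : Function.Injective f :=
    f.injective_of_cornerPartMap_injective htors (hend _ hf_part).injective
  exact ⟨hinj, IsArtinian.surjective_of_injective_endomorphism f hinj⟩

end CornerPart

section Extension

-- Only a local instance: when `N` is an `A`-module it would clash with the pointwise action.
abbrev AddMonoidHom.rightMulModule (A N : Type) [Ring A] [AddCommGroup N] :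
    Module A (A →+ N) where
  smul b φ := φ.comp (AddMonoidHom.mulRight b)
  one_smul φ := AddMonoidHom.ext fun a => congrArg φ (mul_one a)
  mul_smul b c φ := AddMonoidHom.ext fun a => congrArg φ (mul_assoc a b c).symm
  smul_zero _ := rfl
  smul_add _ _ _ := rfl
  add_smul b c φ := AddMonoidHom.ext fun a => (congrArg φ (mul_add a b c)).trans (map_add φ _ _)
  zero_smul φ := AddMonoidHom.ext fun a => (congrArg φ (mul_zero a)).trans (map_zero φ)

attribute [local instance] AddMonoidHom.rightMulModule

variable {A : Type} [Ring A]

lemma AddMonoidHom.rightMul_smul_apply {N : Type} [AddCommGroup N] (b : A) (φ : A →+ N)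
    (a : A) :
    (b • φ) a = φ (a * b) := rfl

variable {e : A} [Fact (IsIdempotentElem e)] {N : Type} [AddCommGroup N] [Module (Corner e) N]

namespace Corner

variable (e) in
def unitHom : N →+ (A →+ N) where
  toFun n := (LinearMap.toSpanSingleton (Corner e) N n).toAddMonoidHom.comp (proj e)
  map_zero' := by ext; simp
  map_add' m n := by ext; simp [smul_add]

@[simp] lemma unitHom_apply (n : N) (a : A) : unitHom e n a = proj e a • n := rfl

lemma unitHom_apply_e (n : N) : unitHom e n e = n := by
  rw [unitHom_apply, proj_e, one_smul]

lemma unitHom_smul (c : Corner e) (n : N) : unitHom e (c • n) = (c : A) • unitHom e n := by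
  ext a
  rw [AddMonoidHom.rightMul_smul_apply, unitHom_apply, unitHom_apply, proj_mul_coe, mul_smul]

lemma e_smul_unitHom (n : N) : e • unitHom e n = unitHom e n := by
  simpa using (unitHom_smul (1 : Corner e) n).symm

variable (e N) in
def extension : Submodule A (A →+ N) := Submodule.span A (Set.range (unitHom e (N := N)))

lemma unitHom_mem_extension (n : N) : unitHom e n ∈ extension e N :=
  Submodule.subset_span ⟨n, rfl⟩

lemma apply_coe_mul_of_mem_extension {φ : A →+ N} (hφ : φ ∈ extension e N) (c : Corner e)
    (a : A) : φ (c * a) = c • φ a := by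
  induction hφ using Submodule.span_induction generalizing a with
  | mem ψ hψ =>
    obtain ⟨n, rfl⟩ := hψ
    rw [unitHom_apply, unitHom_apply, proj_coe_mul, mul_smul]
  | zero => simp
  | add ψ χ _ _ hψ hχ => simp [hψ, hχ]
  | smul b ψ _ hψ => simp only [AddMonoidHom.rightMul_smul_apply, mul_assoc, hψ]

lemma apply_e_mul_of_mem_extension {φ : A →+ N} (hφ : φ ∈ extension e N) (a : A) :
    φ (e * a) = φ a := by
  simpa using apply_coe_mul_of_mem_extension hφ 1 a

lemma extension_finite [Module.Finite (Corner e) N] : Module.Finite A (extension e N) := by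
  classical
  obtain ⟨S, hS⟩ := Module.Finite.fg_top (R := Corner e) (M := N)
  rw [Module.Finite.iff_fg]
  refine ⟨S.image (unitHom e), le_antisymm (Submodule.span_le.2 ?_) (Submodule.span_le.2 ?_)⟩
  · intro φ hφ
    obtain ⟨n, -, rfl⟩ := Finset.mem_image.1 hφ
    exact unitHom_mem_extension n
  · rintro _ ⟨n, rfl⟩
    have hn : n ∈ Submodule.span (Corner e) (S : Set N) := hS ▸ Submodule.mem_top
    induction hn using Submodule.span_induction with
    | mem m hm => exact Submodule.subset_span (Finset.mem_image_of_mem _ hm)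
    | zero => simp
    | add m m' _ _ hm hm' => rw [map_add]; exact add_mem hm hm'
    | smul c m _ hm => rw [unitHom_smul]; exact Submodule.smul_mem _ _ hm

variable (e N) in
def unitToCornerPart : N →ₗ[Corner e] cornerPart e (extension e N) where
  toFun n := ⟨⟨unitHom e n, unitHom_mem_extension n⟩, Subtype.ext (e_smul_unitHom n)⟩
  map_add' m n := Subtype.ext (Subtype.ext (map_add _ m n))
  map_smul' c n := Subtype.ext (Subtype.ext (unitHom_smul c n))

lemma unitToCornerPart_bijective : Function.Bijective (unitToCornerPart e N) := by
  refine ⟨fun m n h => ?_, fun ⟨⟨φ, hφ⟩, hfix⟩ => ⟨φ e, ?_⟩⟩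
  · have h_e := DFunLike.congr_fun
      (congrArg (fun x : cornerPart e (extension e N) => ((x : extension e N) : A →+ N)) h) e
    simpa only [unitToCornerPart, LinearMap.coe_mk, AddHom.coe_mk, unitHom_apply_e] using h_e
  · have hφ_mul_e (a : A) : φ (a * e) = φ a := DFunLike.congr_fun (congrArg Subtype.val hfix) a
    refine Subtype.ext (Subtype.ext (AddMonoidHom.ext fun a => ?_))
    calc unitHom e (φ e) a = proj e a • φ e := rfl
      _ = φ (proj e a * e) := (apply_coe_mul_of_mem_extension hφ _ e).symm
      _ = φ a := by
        rw [coe_mul_e, coe_proj, mul_assoc, apply_e_mul_of_mem_extension hφ, hφ_mul_e]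

variable (e N) in
noncomputable def extensionCornerPartEquiv : N ≃ₗ[Corner e] cornerPart e (extension e N) :=
  LinearEquiv.ofBijective _ unitToCornerPart_bijective

lemma span_cornerPart_extension :
    Submodule.span A (Set.range ((↑) : cornerPart e (extension e N) → extension e N)) = ⊤ := by
  refine top_unique (Submodule.span_span_coe_preimage.symm.le.trans (Submodule.span_mono ?_))
  rintro x ⟨n, hn⟩
  exact ⟨unitToCornerPart e N n, Subtype.ext hn⟩

lemma extension_eq_zero_of_forall_e_smul (x : extension e N) (hx : ∀ a : A, e • a • x = 0) :
    x = 0 := by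
  refine Subtype.ext (AddMonoidHom.ext fun a => ?_)
  have h := DFunLike.congr_fun (congrArg Subtype.val (hx a)) e
  simpa [AddMonoidHom.rightMul_smul_apply, (Fact.out : IsIdempotentElem e).eq,
    apply_e_mul_of_mem_extension x.2] using h

theorem isBrick_extension [IsArtinianRing A]
    (hN : IsBrick (Corner e) (ModuleCat.of (Corner e) N)) :
    IsBrick A (ModuleCat.of A (extension e N)) :=
  have : Module.Finite (Corner e) N := hN.1
  have : Module.Finite A (extension e N) := extension_finite
  isBrick_of_isBrick_cornerPart span_cornerPart_extension extension_eq_zero_of_forall_e_smul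
    (hN.of_linearEquiv (extensionCornerPartEquiv e N))

end Corner

theorem IsTauTiltingFinite.corner [IsArtinianRing A] (h : IsTauTiltingFinite A) :
    IsTauTiltingFinite (Corner e) := by
  obtain ⟨n, M, hM⟩ := h
  refine ⟨n, fun i => ModuleCat.of (Corner e) (cornerPart e (M i)), fun N hN => ?_⟩
  obtain ⟨i, ⟨u⟩⟩ := hM _ (Corner.isBrick_extension hN)
  exact ⟨i, ⟨(Corner.extensionCornerPartEquiv e N).trans u.cornerPartCongr⟩⟩

end Extension

theorem stmt8_general (k A : Type) [Field k]
    [Ring A] [Algebra k A] [FiniteDimensional k A]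
    (h : IsTauTiltingFinite A) (e : A) (he : IsIdempotentElem e) :
    @IsTauTiltingFinite (Corner e) (cornerRing he) := by
  have : Fact (IsIdempotentElem e) := ⟨he⟩
  have : IsArtinianRing A := IsArtinianRing.of_finite k A
  exact h.corner

theorem stmt8 (k A : Type) [Field k] [IsAlgClosed k]
    [Ring A] [Algebra k A] [FiniteDimensional k A]
    (h : IsTauTiltingFinite A) (e : A) (he : IsIdempotentElem e) :
    @IsTauTiltingFinite (Corner e) (cornerRing he) :=
  stmt8_general k A h e he
end

section
/- Let A be a simply connected finite-dimensional k-algebra that is not Schurian. Then A is τ-tilting infinite. -/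
open Quiver
set_option linter.unusedSectionVars false

/-- The path algebra of a quiver `V` over a field `k`: the free `k`-module on
the set of all paths in `V`, with multiplication induced by concatenation of
paths (composable paths concatenate, non-composable products vanish). -/
abbrev PathAlgebra (k V : Type) [Field k] [Quiver.{1} V] : Type 1 :=
  (Σ a b : V, Quiver.Path a b) →₀ k

namespace PathAlgebra

variable {k V : Type} [Field k] [Quiver.{1} V] [Fintype V] [DecidableEq V]

/-- Transport of a path along an equality of its source. -/
def castPath {a b c : V} (h : a = b) (p : Quiver.Path b c) : Quiver.Path a c := by
  subst h; exact p

@[simp] lemma castPath_rfl {a c : V} (p : Quiver.Path a c) : castPath rfl p = p := rfl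

/-- Product of two basis paths: their concatenation if they are composable,
and `0` otherwise. -/
noncomputable def mulIdx (p q : Σ a b : V, Quiver.Path a b) : PathAlgebra k V :=
  if h : p.2.1 = q.1 then
    Finsupp.single ⟨p.1, q.2.1, p.2.2.comp (castPath h q.2.2)⟩ 1
  else 0

/-- Multiplication on the path algebra, as a bilinear map. -/
noncomputable def mulL :
    PathAlgebra k V →ₗ[k] PathAlgebra k V →ₗ[k] PathAlgebra k V :=
  Finsupp.lsum k fun p =>
    LinearMap.toSpanSingleton k _
      (Finsupp.lsum k fun q => LinearMap.toSpanSingleton k _ (mulIdx p q))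

noncomputable instance : Mul (PathAlgebra k V) := ⟨fun x y => mulL x y⟩

lemma mul_def (x y : PathAlgebra k V) : x * y = mulL x y := rfl

lemma single_mul_single (p q : Σ a b : V, Quiver.Path a b) (a b : k) :
    (Finsupp.single p a * Finsupp.single q b : PathAlgebra k V)
      = (a * b) • mulIdx p q := by
  rw [mul_def, mulL]
  simp [Finsupp.lsum_single, LinearMap.toSpanSingleton_apply, smul_smul]

noncomputable instance : One (PathAlgebra k V) :=
  ⟨∑ a : V, Finsupp.single ⟨a, a, Quiver.Path.nil⟩ 1⟩

lemma one_def : (1 : PathAlgebra k V)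
    = ∑ a : V, Finsupp.single ⟨a, a, Quiver.Path.nil⟩ 1 := rfl

private lemma zero_mul' (x : PathAlgebra k V) : 0 * x = 0 := by
  rw [mul_def, map_zero]; rfl

private lemma mul_zero' (x : PathAlgebra k V) : x * 0 = 0 := by
  rw [mul_def, map_zero]

private lemma add_mul' (x y z : PathAlgebra k V) : (x + y) * z = x * z + y * z := by
  rw [mul_def, mul_def, mul_def, map_add]; rfl

private lemma mul_add' (x y z : PathAlgebra k V) : x * (y + z) = x * y + x * z := by
  rw [mul_def, mul_def, mul_def, map_add]

private lemma smul_mul' (c : k) (x y : PathAlgebra k V) : (c • x) * y = c • (x * y) := by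
  rw [mul_def, mul_def, map_smul]; rfl

private lemma mul_smul' (c : k) (x y : PathAlgebra k V) : x * (c • y) = c • (x * y) := by
  rw [mul_def, mul_def, map_smul]

private lemma mul_assoc' (x y z : PathAlgebra k V) : x * y * z = x * (y * z) := by
  induction x using Finsupp.induction_linear with
  | zero => rw [zero_mul', zero_mul', zero_mul']
  | add f g hf hg => rw [add_mul', add_mul', add_mul', hf, hg]
  | single p xp =>
    induction y using Finsupp.induction_linear with
    | zero => rw [zero_mul', mul_zero', zero_mul']
    | add f g hf hg => rw [mul_add', add_mul', add_mul', mul_add', hf, hg]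
    | single q xq =>
      induction z using Finsupp.induction_linear with
      | zero => rw [mul_zero', mul_zero', mul_zero']
      | add f g hf hg => rw [mul_add', mul_add', mul_add', hf, hg]
      | single r xr =>
        obtain ⟨a1, a2, f⟩ := p
        obtain ⟨a3, a4, g⟩ := q
        obtain ⟨a5, a6, h⟩ := r
        rw [single_mul_single, single_mul_single, smul_mul', mul_smul']
        by_cases h12 : a2 = a3
        · subst h12
          by_cases h45 : a4 = a5
          · subst h45
            simp [mulIdx, single_mul_single, smul_smul, Quiver.Path.comp_assoc,
              mul_assoc, mul_comm, mul_left_comm]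
          · simp [mulIdx, h45, single_mul_single, smul_smul, mul_zero', zero_mul']
        · by_cases h45 : a4 = a5
          · subst h45
            simp [mulIdx, h12, single_mul_single, smul_smul, mul_zero', zero_mul']
          · simp [mulIdx, h12, h45, single_mul_single, smul_smul, mul_zero', zero_mul']

private lemma one_mul' (x : PathAlgebra k V) : 1 * x = x := by
  induction x using Finsupp.induction_linear with
  | zero => rw [mul_zero']
  | add f g hf hg => rw [mul_add', hf, hg]
  | single p xp =>
    obtain ⟨a, b, f⟩ := p
    rw [one_def, mul_def, map_sum, LinearMap.sum_apply]
    have : ∀ c : V,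
        (mulL (Finsupp.single ⟨c, c, Quiver.Path.nil⟩ (1 : k)))
          (Finsupp.single ⟨a, b, f⟩ xp)
        = if c = a then Finsupp.single ⟨a, b, f⟩ xp else 0 := by
      intro c
      rw [← mul_def, single_mul_single, one_mul, mulIdx]
      by_cases hca : c = a
      · subst hca
        simp [Quiver.Path.nil_comp, Finsupp.smul_single]
      · simp [hca]
    rw [Finset.sum_congr rfl fun c _ => this c]
    simp

private lemma mul_one' (x : PathAlgebra k V) : x * 1 = x := by
  induction x using Finsupp.induction_linear with
  | zero => rw [zero_mul']
  | add f g hf hg => rw [add_mul', hf, hg]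
  | single p xp =>
    obtain ⟨a, b, f⟩ := p
    rw [one_def, mul_def, map_sum]
    have : ∀ c : V,
        (mulL (Finsupp.single ⟨a, b, f⟩ xp))
          (Finsupp.single ⟨c, c, Quiver.Path.nil⟩ (1 : k))
        = if c = b then Finsupp.single ⟨a, b, f⟩ xp else 0 := by
      intro c
      rw [← mul_def, single_mul_single, mul_one, mulIdx]
      by_cases hcb : b = c
      · subst hcb
        simp [Finsupp.smul_single]
      · simp [hcb, Ne.symm hcb]
    rw [Finset.sum_congr rfl fun c _ => this c]
    simp

noncomputable instance instRing : Ring (PathAlgebra k V) :=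
  { (inferInstanceAs (AddCommGroup (PathAlgebra k V)) : AddCommGroup (PathAlgebra k V)) with
    mul := (· * ·)
    one := 1
    mul_assoc := mul_assoc'
    one_mul := one_mul'
    mul_one := mul_one'
    left_distrib := mul_add'
    right_distrib := add_mul'
    zero_mul := zero_mul'
    mul_zero := mul_zero' }

noncomputable instance instAlgebra : Algebra k (PathAlgebra k V) :=
  Algebra.ofModule smul_mul' mul_smul'

end PathAlgebra
/-- `φ` presents `A` as a bound quiver algebra `kQ/I` with `I = ker φ` an
admissible ideal: `φ` is surjective, `ker φ ⊆ R_Q²` (every element of the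
kernel is supported on paths of length at least `2`), and `R_Q^m ⊆ ker φ` for
some `m` (every path of length at least `m` lies in the kernel). -/
def IsAdmissiblePresentation {k V A : Type} [Field k] [Quiver.{1} V]
    [Fintype V] [DecidableEq V] [Ring A] [Algebra k A]
    (φ : PathAlgebra k V →ₐ[k] A) : Prop :=
  Function.Surjective φ ∧
  (∀ x : PathAlgebra k V, φ x = 0 → ∀ p ∈ Finsupp.support x, 2 ≤ p.2.2.length) ∧
  ∃ m : ℕ, ∀ p : Σ a b : V, Quiver.Path a b, m ≤ p.2.2.length →
    φ (Finsupp.single p 1) = 0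

/-- The homotopy relation on walks of a bound quiver `(Q, I)` (with
`K = I` the kernel of the presentation): the smallest equivalence relation
on walks (paths in the symmetrified quiver) such that `α α⁻¹` and `α⁻¹ α`
are homotopic to trivial walks, the two branches of any minimal relation in
`I` are homotopic, and which is compatible with composition of walks. -/
inductive HomotopicRel {k V : Type} [Field k] [Quiver.{1} V]
    (K : Set (PathAlgebra k V)) :
    ∀ {a b : Quiver.Symmetrify V}, Quiver.Path a b → Quiver.Path a b → Prop
  | refl {a b : Quiver.Symmetrify V} (p : Quiver.Path a b) : HomotopicRel K p p
  | symm {a b : Quiver.Symmetrify V} {p q : Quiver.Path a b} :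
      HomotopicRel K p q → HomotopicRel K q p
  | trans {a b : Quiver.Symmetrify V} {p q r : Quiver.Path a b} :
      HomotopicRel K p q → HomotopicRel K q r → HomotopicRel K p r
  | cancel_fwd {a b : V} (e : a ⟶ b) :
      HomotopicRel K ((Quiver.Path.nil.cons e.toPos).cons e.toNeg)
        Quiver.Path.nil
  | cancel_bwd {a b : V} (e : a ⟶ b) :
      HomotopicRel K ((Quiver.Path.nil.cons e.toNeg).cons e.toPos)
        Quiver.Path.nil
  | comp_left {a b c : Quiver.Symmetrify V} (w : Quiver.Path c a)
      {p q : Quiver.Path a b} :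
      HomotopicRel K p q → HomotopicRel K (w.comp p) (w.comp q)
  | comp_right {a b c : Quiver.Symmetrify V} {p q : Quiver.Path a b}
      (w : Quiver.Path b c) :
      HomotopicRel K p q → HomotopicRel K (p.comp w) (q.comp w)
  | rel {a b : V} (x : PathAlgebra k V) (hx : x ∈ K)
      (hends : ∀ s ∈ Finsupp.support x, s.1 = a ∧ s.2.1 = b)
      (hcard : 2 ≤ (Finsupp.support x).card)
      (hmin : ∀ S : Finset (Σ a b : V, Quiver.Path a b),
        S ⊂ Finsupp.support x → S.Nonempty →
        (∑ p ∈ S, Finsupp.single p (x p)) ∉ K)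
      (p q : Quiver.Path a b)
      (hp : (⟨a, b, p⟩ : Σ a b : V, Quiver.Path a b) ∈ Finsupp.support x)
      (hq : (⟨a, b, q⟩ : Σ a b : V, Quiver.Path a b) ∈ Finsupp.support x) :
      HomotopicRel K (Quiver.Symmetrify.of.mapPath p)
        (Quiver.Symmetrify.of.mapPath q)

/-- A presentation is triangular, connected, and has trivial fundamental
group: the quiver is acyclic, the underlying graph is connected, and any
closed walk is homotopic to the trivial walk. -/
def PresentationTriangularConnectedTrivialPi1 {k V A : Type} [Field k]
    [Quiver.{1} V] [Fintype V] [DecidableEq V] [Ring A] [Algebra k A]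
    (φ : PathAlgebra k V →ₐ[k] A) : Prop :=
  (∀ (a : V) (p : Quiver.Path a a), p.length = 0) ∧
  (∀ a b : Quiver.Symmetrify V, Nonempty (Quiver.Path a b)) ∧
  (∀ (a : Quiver.Symmetrify V) (w : Quiver.Path a a),
    HomotopicRel {x | φ x = 0} w Quiver.Path.nil)

/-- A simply connected algebra: a connected triangular algebra such that the
fundamental group of every (bound quiver) presentation is trivial. -/
def IsSimplyConnectedAlg (k A : Type) [Field k] [Ring A] [Algebra k A] : Prop :=
  (∃ (n : ℕ) (G : Quiver.{1} (Fin n))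
      (φ : @PathAlgebra k (Fin n) ‹Field k› G →ₐ[k] A),
    @IsAdmissiblePresentation k (Fin n) A ‹Field k› G
      (inferInstanceAs (Fintype (Fin n))) (inferInstanceAs (DecidableEq (Fin n)))
      ‹Ring A› ‹Algebra k A› φ) ∧
  ∀ (n : ℕ) (G : Quiver.{1} (Fin n))
      (φ : @PathAlgebra k (Fin n) ‹Field k› G →ₐ[k] A),
    @IsAdmissiblePresentation k (Fin n) A ‹Field k› G
      (inferInstanceAs (Fintype (Fin n))) (inferInstanceAs (DecidableEq (Fin n)))
      ‹Ring A› ‹Algebra k A› φ →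
    @PresentationTriangularConnectedTrivialPi1 k (Fin n) A ‹Field k› G
      (inferInstanceAs (Fintype (Fin n))) (inferInstanceAs (DecidableEq (Fin n)))
      ‹Ring A› ‹Algebra k A› φ

/-- The subspace `e R f = {e x f : x ∈ R}` of an algebra `R`. -/
noncomputable def cornerSpace (k : Type) {R : Type} [Field k] [Ring R]
    [Algebra k R] (e f : R) : Submodule k R :=
  LinearMap.range ((LinearMap.mulRight k f).comp (LinearMap.mulLeft k e))

/-- An algebra is Schurian if `dim (e_i A e_j) ≤ 1` for every complete set of
primitive orthogonal idempotents. -/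
def IsSchurian (k A : Type) [Field k] [Ring A] [Algebra k A] : Prop :=
  ∀ {ι : Type} [Fintype ι] (e : ι → A),
    IsCompleteSetOfPrimitiveOrthogonalIdempotents e →
    ∀ i j, Module.finrank k (cornerSpace k (e i) (e j)) ≤ 1

/-!
The algebra has an admissible presentation `A = kQ/I` with `Q` acyclic. Acyclicity gives
`e_a A e_a = k e_a` for the vertex idempotents, and the coefficients of the trivial paths descend
to a character `χ : A → k^{Q₀}` whose kernel, the image of the arrow ideal, is nilpotent. Lifting
idempotents along `χ` shows that every primitive idempotent is conjugate to some `e_a`, so the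
failure of the Schurian property gives vertices `c ≠ d` with `dim e_c A e_d ≥ 2`.

For `w ∈ e_c A e_d` the module `A e_d / A w` is a brick: its endomorphisms come from
`e_d A e_d = k`, and it is nonzero because `e_d A e_c · e_c A e_d` lies in the radical of
`e_d A e_d = k`. An isomorphism `A e_d / A w ≅ A e_d / A w'` forces `w ∈ k w'` (using
`e_c A e_c = k`), so the elements `u - λ v` for independent `u, v ∈ e_c A e_d` give infinitely
many bricks.
-/

section CornerSpace

variable {k A : Type} [Field k] [Ring A] [Algebra k A]

lemma mem_cornerSpace_iff {e f x : A} : x ∈ cornerSpace k e f ↔ ∃ y, e * y * f = x := by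
  simp [cornerSpace]

lemma mul_left_eq_of_mem_cornerSpace {e f x : A} (he : IsIdempotentElem e)
    (hx : x ∈ cornerSpace k e f) : e * x = x := by
  obtain ⟨y, rfl⟩ := mem_cornerSpace_iff.mp hx
  simp only [← mul_assoc, he.eq]

lemma mul_right_eq_of_mem_cornerSpace {e f x : A} (hf : IsIdempotentElem f)
    (hx : x ∈ cornerSpace k e f) : x * f = x := by
  obtain ⟨y, rfl⟩ := mem_cornerSpace_iff.mp hx
  simp only [mul_assoc, hf.eq]

lemma finrank_cornerSpace_eq_of_mul_eq_mul {g₁ g₂ f₁ f₂ : A} {u₁ u₂ : Aˣ}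
    (h₁ : g₁ * u₁ = u₁ * f₁) (h₂ : g₂ * u₂ = u₂ * f₂) :
    Module.finrank k (cornerSpace k g₁ g₂) = Module.finrank k (cornerSpace k f₁ f₂) := by
  let L : A ≃ₗ[k] A :=
    { toFun := fun x => ↑u₁⁻¹ * x * u₂
      invFun := fun x => u₁ * x * ↑u₂⁻¹
      map_add' := fun x y => by simp only [mul_add, add_mul]
      map_smul' := fun c x => by simp only [mul_smul_comm, smul_mul_assoc, RingHom.id_apply]
      left_inv := fun x => by simp [mul_assoc]
      right_inv := fun x => by simp [mul_assoc] }
  have hL : ∀ y, L (g₁ * y * g₂) = f₁ * L y * f₂ := fun y => by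
    have h₁' : ↑u₁⁻¹ * g₁ = f₁ * ↑u₁⁻¹ := by
      rw [Units.inv_mul_eq_iff_eq_mul, ← mul_assoc, ← h₁, mul_assoc, Units.mul_inv, mul_one]
    change ↑u₁⁻¹ * (g₁ * y * g₂) * u₂ = f₁ * (↑u₁⁻¹ * y * u₂) * f₂
    simp only [← mul_assoc, h₁']
    simp only [mul_assoc, h₂]
  have hmap : (cornerSpace k g₁ g₂).map (L : A →ₗ[k] A) = cornerSpace k f₁ f₂ := by
    ext x
    simp only [Submodule.mem_map, mem_cornerSpace_iff]
    constructor
    · rintro ⟨_, ⟨y, rfl⟩, rfl⟩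
      exact ⟨L y, (hL y).symm⟩
    · rintro ⟨y, rfl⟩
      exact ⟨_, ⟨L.symm y, rfl⟩, by simp [hL]⟩
  rw [← hmap, LinearEquiv.finrank_map_eq]

end CornerSpace

lemma Submodule.exists_linearIndependent_pair_of_one_lt_finrank {k M : Type} [Field k]
    [AddCommGroup M] [Module k M] {W : Submodule k M} (h : 1 < Module.finrank k W) :
    ∃ u ∈ W, ∃ v ∈ W, LinearIndependent k ![u, v] := by
  have : Nontrivial W := Module.nontrivial_of_finrank_pos (R := k) (by omega)
  obtain ⟨x, hx⟩ := exists_ne (0 : W)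
  obtain ⟨y, hy⟩ := _root_.exists_linearIndependent_pair_of_one_lt_finrank h hx
  refine ⟨x, x.2, y, y.2, LinearIndependent.pair_iff.mpr fun a b hab => ?_⟩
  exact LinearIndependent.pair_iff.mp hy a b (Subtype.ext (by simpa using hab))

namespace PathAlgebra

open Finsupp

section Paths

variable {V : Type} [Quiver.{1} V]

lemma eq_nil_of_length_eq_zero (p : Σ a b : V, Quiver.Path a b) (h : p.2.2.length = 0) :
    p = ⟨p.1, p.1, .nil⟩ := by
  obtain ⟨a, b, q⟩ := p
  cases q with
  | nil => rfl
  | cons => simp at h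

lemma length_castPath {a b c : V} (h : a = b) (p : Quiver.Path b c) :
    (castPath h p).length = p.length := by
  subst h; rfl

variable {k : Type} [Field k]

lemma single_apply_eq_zero_of_length_ne {p r : Σ a b : V, Quiver.Path a b} (c : k)
    (h : p.2.2.length ≠ r.2.2.length) : (single p c : PathAlgebra k V) r = 0 :=
  single_eq_of_ne fun hpr => h (by rw [hpr])

-- `R_Q^j`, the `j`-th power of the arrow ideal.
noncomputable def arrowIdealPow (j : ℕ) : Submodule k (PathAlgebra k V) :=
  Submodule.span k {x | ∃ p : Σ a b : V, Quiver.Path a b, j ≤ p.2.2.length ∧ x = single p 1}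

lemma single_mem_arrowIdealPow {j : ℕ} {p : Σ a b : V, Quiver.Path a b} (c : k)
    (h : j ≤ p.2.2.length) : single p c ∈ (arrowIdealPow j : Submodule k (PathAlgebra k V)) := by
  rw [← mul_one c, ← smul_eq_mul, ← smul_single]
  exact Submodule.smul_mem _ _ (Submodule.subset_span ⟨p, h, rfl⟩)

lemma mem_arrowIdealPow_of_forall_mem_support {j : ℕ} (x : PathAlgebra k V)
    (h : ∀ p ∈ x.support, j ≤ p.2.2.length) : x ∈ (arrowIdealPow j : Submodule k _) := by
  rw [← sum_single x]
  exact Submodule.sum_mem _ fun p hp => single_mem_arrowIdealPow _ (h p hp)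

lemma mem_arrowIdealPow_zero (x : PathAlgebra k V) : x ∈ (arrowIdealPow 0 : Submodule k _) :=
  mem_arrowIdealPow_of_forall_mem_support x fun _ _ => Nat.zero_le _

lemma apply_nil_eq_zero_of_mem_arrowIdealPow_one {z : PathAlgebra k V}
    (hz : z ∈ arrowIdealPow 1) (a : V) : z ⟨a, a, .nil⟩ = 0 := by
  induction hz using Submodule.span_induction with
  | mem x hx =>
    obtain ⟨p, hp, rfl⟩ := hx
    exact single_apply_eq_zero_of_length_ne 1 (by simp; omega)
  | zero => rfl
  | add x y _ _ hx hy => simp [hx, hy]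
  | smul c x _ hx => simp [hx]

variable [DecidableEq V]

lemma single_nil_apply_nil (s a : V) (c : k) :
    (single ⟨s, s, .nil⟩ c : PathAlgebra k V) ⟨a, a, .nil⟩ = if s = a then c else 0 := by
  split_ifs with h
  · subst h; exact single_eq_same
  · exact single_eq_of_ne (by rintro ⟨⟩; exact h rfl)

lemma mulIdx_eq_zero_or_eq_single (p q : Σ a b : V, Quiver.Path a b) :
    mulIdx (k := k) p q = 0 ∨ ∃ r : Σ a b : V, Quiver.Path a b,
      r.2.2.length = p.2.2.length + q.2.2.length ∧ mulIdx (k := k) p q = single r 1 := by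
  unfold mulIdx
  split_ifs
  · exact Or.inr ⟨_, by simp [length_castPath], rfl⟩
  · exact Or.inl rfl

end Paths

variable {k V : Type} [Field k] [Quiver.{1} V] [Fintype V] [DecidableEq V]

lemma arrowIdealPow_mul_le (i j : ℕ) :
    (arrowIdealPow i * arrowIdealPow j : Submodule k (PathAlgebra k V)) ≤
      arrowIdealPow (i + j) := by
  rw [arrowIdealPow, arrowIdealPow, Submodule.span_mul_span, Submodule.span_le]
  rintro _ ⟨_, ⟨p, hp, rfl⟩, _, ⟨q, hq, rfl⟩, rfl⟩
  change single p 1 * single q 1 ∈ _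
  rw [single_mul_single, one_mul, one_smul]
  rcases mulIdx_eq_zero_or_eq_single (k := k) p q with h | ⟨r, hr, h⟩
  · rw [h]; exact Submodule.zero_mem _
  · rw [h]; exact single_mem_arrowIdealPow _ (by omega)

lemma mul_mem_arrowIdealPow_one_of_left {x : PathAlgebra k V} (hx : x ∈ arrowIdealPow 1)
    (y : PathAlgebra k V) : x * y ∈ (arrowIdealPow 1 : Submodule k _) :=
  arrowIdealPow_mul_le 1 0 (Submodule.mul_mem_mul hx (mem_arrowIdealPow_zero y))

lemma mul_mem_arrowIdealPow_one_of_right (x : PathAlgebra k V) {y : PathAlgebra k V}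
    (hy : y ∈ arrowIdealPow 1) : x * y ∈ (arrowIdealPow 1 : Submodule k _) := by
  simpa using arrowIdealPow_mul_le 0 1 (Submodule.mul_mem_mul (mem_arrowIdealPow_zero x) hy)

lemma pow_mem_arrowIdealPow {z : PathAlgebra k V} (hz : z ∈ arrowIdealPow 1) (n : ℕ) :
    z ^ n ∈ (arrowIdealPow n : Submodule k _) := by
  induction n with
  | zero => exact mem_arrowIdealPow_zero _
  | succ n ih => exact arrowIdealPow_mul_le n 1 (pow_succ z n ▸ Submodule.mul_mem_mul ih hz)

lemma single_mul_single_apply_nil (p q : Σ s t : V, Quiver.Path s t) (c d : k) (a : V) :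
    (single p c * single q d : PathAlgebra k V) ⟨a, a, .nil⟩ =
      (single p c : PathAlgebra k V) ⟨a, a, .nil⟩ *
        (single q d : PathAlgebra k V) ⟨a, a, .nil⟩ := by
  obtain ⟨s, t, p⟩ := p
  obtain ⟨s', t', q⟩ := q
  cases p with
  | cons p α =>
    have hp : single ⟨s, _, p.cons α⟩ c ∈ (arrowIdealPow 1 : Submodule k (PathAlgebra k V)) :=
      single_mem_arrowIdealPow c (by simp)
    rw [apply_nil_eq_zero_of_mem_arrowIdealPow_one hp, zero_mul,
      apply_nil_eq_zero_of_mem_arrowIdealPow_one (mul_mem_arrowIdealPow_one_of_left hp _)]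
  | nil =>
  cases q with
  | cons q β =>
    have hq : single ⟨s', _, q.cons β⟩ d ∈ (arrowIdealPow 1 : Submodule k (PathAlgebra k V)) :=
      single_mem_arrowIdealPow d (by simp)
    rw [apply_nil_eq_zero_of_mem_arrowIdealPow_one hq, mul_zero,
      apply_nil_eq_zero_of_mem_arrowIdealPow_one (mul_mem_arrowIdealPow_one_of_right _ hq)]
  | nil =>
    rw [single_mul_single, mulIdx]
    by_cases h : s = s'
    · subst h
      simp only [dif_pos, castPath_rfl, Quiver.Path.comp_nil, Finsupp.smul_apply,
        single_nil_apply_nil]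
      split_ifs <;> simp
    · rw [dif_neg h, smul_zero, single_nil_apply_nil, single_nil_apply_nil]
      split_ifs <;> simp_all

lemma mul_apply_nil (x y : PathAlgebra k V) (a : V) :
    (x * y) ⟨a, a, .nil⟩ = x ⟨a, a, .nil⟩ * y ⟨a, a, .nil⟩ := by
  induction x using Finsupp.induction_linear with
  | zero => simp [mul_def]
  | add x x' hx hx' => simp [add_mul, hx, hx']
  | single p c =>
    induction y using Finsupp.induction_linear with
    | zero => simp [mul_def]
    | add y y' hy hy' => simp [mul_add, hy, hy']
    | single q d => exact single_mul_single_apply_nil p q c d a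

noncomputable def vertexCoeff : PathAlgebra k V →ₐ[k] (V → k) where
  toFun z a := z ⟨a, a, .nil⟩
  map_one' := by
    ext a
    simp [one_def, Finsupp.finsetSum_apply, single_nil_apply_nil]
  map_mul' x y := funext (mul_apply_nil x y)
  map_zero' := rfl
  map_add' _ _ := rfl
  commutes' c := by
    ext a
    simp [Algebra.algebraMap_eq_smul_one, one_def, single_nil_apply_nil]

@[simp] lemma vertexCoeff_apply (z : PathAlgebra k V) (a : V) :
    vertexCoeff z a = z ⟨a, a, .nil⟩ := rfl

lemma mem_arrowIdealPow_one_of_vertexCoeff_eq_zero {z : PathAlgebra k V}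
    (hz : vertexCoeff z = 0) : z ∈ arrowIdealPow 1 := by
  refine mem_arrowIdealPow_of_forall_mem_support z fun p hp => ?_
  by_contra! h
  rw [eq_nil_of_length_eq_zero p (by omega), mem_support_iff] at hp
  exact hp (congr_fun hz p.1)

noncomputable def vertex (a : V) : PathAlgebra k V := single ⟨a, a, .nil⟩ 1

lemma vertexCoeff_vertex (a : V) :
    vertexCoeff (vertex a : PathAlgebra k V) = Pi.single a 1 := by
  ext b
  simp [vertex, single_nil_apply_nil, Pi.single_apply, eq_comm]

lemma vertex_mul_single (a : V) (p : Σ s t : V, Quiver.Path s t) (c : k) :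
    (vertex a * single p c : PathAlgebra k V) = if a = p.1 then single p c else 0 := by
  obtain ⟨s, t, q⟩ := p
  rw [vertex, single_mul_single, one_mul, mulIdx]
  by_cases h : a = s
  · subst h; simp
  · simp [h]

lemma single_mul_vertex (p : Σ s t : V, Quiver.Path s t) (c : k) (a : V) :
    (single p c * vertex a : PathAlgebra k V) = if p.2.1 = a then single p c else 0 := by
  obtain ⟨s, t, q⟩ := p
  rw [vertex, single_mul_single, mul_one, mulIdx]
  by_cases h : t = a
  · subst h; simp
  · simp [h]

lemma isIdempotentElem_vertex (a : V) : IsIdempotentElem (vertex a : PathAlgebra k V) :=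
  (vertex_mul_single a _ 1).trans (if_pos rfl)

lemma vertex_mul_mul_vertex (htri : ∀ (a : V) (p : Quiver.Path a a), p.length = 0)
    (a : V) (z : PathAlgebra k V) : vertex a * z * vertex a = z ⟨a, a, .nil⟩ • vertex a := by
  induction z using Finsupp.induction_linear with
  | zero => simp [mul_def]
  | add x y hx hy => simp [mul_add, add_mul, hx, hy, add_smul]
  | single p c =>
    obtain ⟨s, t, q⟩ := p
    rw [vertex_mul_single]
    by_cases hs : a = s
    · subst hs
      rw [if_pos rfl, single_mul_vertex]
      by_cases ht : t = a
      · subst ht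
        obtain rfl : q = .nil := by
          cases q with
          | nil => rfl
          | cons q α => exact absurd (htri _ (q.cons α)) (by simp)
        rw [if_pos rfl, single_nil_apply_nil, if_pos rfl, vertex, smul_single, smul_eq_mul,
          mul_one]
      · rw [if_neg ht, single_eq_of_ne' fun h => ht (congrArg (·.2.1) h), zero_smul]
    · rw [if_neg hs, single_eq_of_ne' fun h => hs (congrArg (·.1) h).symm, zero_smul]
      simp [mul_def]

end PathAlgebra

namespace IsAdmissiblePresentation

open PathAlgebra

variable {k V A : Type} [Field k] [Quiver.{1} V] [Fintype V] [DecidableEq V] [Ring A]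
  [Algebra k A] {φ : PathAlgebra k V →ₐ[k] A} (hφ : IsAdmissiblePresentation φ)
include hφ

lemma ker_le_ker_vertexCoeff :
    RingHom.ker φ.toRingHom ≤ RingHom.ker (vertexCoeff (k := k) (V := V)).toRingHom := by
  intro z hz
  ext a
  by_contra h
  have := hφ.2.1 z hz ⟨a, a, .nil⟩ (Finsupp.mem_support_iff.mpr h)
  simp at this

noncomputable def vertexChar : A →ₐ[k] (V → k) :=
  { φ.toRingHom.liftOfSurjective hφ.1 ⟨_, hφ.ker_le_ker_vertexCoeff⟩ with
    commutes' := fun c => by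
      rw [← φ.commutes c]
      exact (RingHom.liftOfSurjective_comp_apply φ.toRingHom hφ.1 _ _).trans
        (vertexCoeff.commutes c) }

lemma vertexChar_map (z : PathAlgebra k V) : hφ.vertexChar (φ z) = vertexCoeff z :=
  RingHom.liftOfSurjective_comp_apply φ.toRingHom hφ.1 ⟨_, hφ.ker_le_ker_vertexCoeff⟩ z

lemma vertexChar_map_vertex (a : V) : hφ.vertexChar (φ (vertex a)) = Pi.single a 1 := by
  rw [vertexChar_map, vertexCoeff_vertex]

lemma map_vertex_ne_zero (a : V) : φ (vertex a) ≠ 0 := fun h => by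
  simpa [h] using congr_fun (hφ.vertexChar_map_vertex a) a

lemma exists_map_eq_zero_of_mem_arrowIdealPow : ∃ m : ℕ, ∀ z ∈ arrowIdealPow m, φ z = 0 := by
  obtain ⟨m, hm⟩ := hφ.2.2
  refine ⟨m, fun z hz => ?_⟩
  induction hz using Submodule.span_induction with
  | mem z hz => obtain ⟨p, hp, rfl⟩ := hz; exact hm p hp
  | zero => exact map_zero φ
  | add x y _ _ hx hy => rw [map_add, hx, hy, add_zero]
  | smul c x _ hx => rw [map_smul, hx, smul_zero]

lemma isNilpotent_of_mem_ker_vertexChar : ∀ x ∈ RingHom.ker hφ.vertexChar, IsNilpotent x := by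
  intro x hx
  obtain ⟨z, rfl⟩ := hφ.1 x
  obtain ⟨m, hm⟩ := hφ.exists_map_eq_zero_of_mem_arrowIdealPow
  have hz : z ∈ arrowIdealPow 1 :=
    mem_arrowIdealPow_one_of_vertexCoeff_eq_zero (by rw [← hφ.vertexChar_map]; exact hx)
  exact ⟨m, by rw [← map_pow, hm _ (pow_mem_arrowIdealPow hz m)]⟩

variable (htri : ∀ (a : V) (p : Quiver.Path a a), p.length = 0)
include htri

lemma map_vertex_mul_mul_map_vertex (a : V) (x : A) :
    φ (vertex a) * x * φ (vertex a) = hφ.vertexChar x a • φ (vertex a) := by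
  obtain ⟨z, rfl⟩ := hφ.1 x
  rw [← map_mul, ← map_mul, vertex_mul_mul_vertex htri, map_smul, vertexChar_map,
    vertexCoeff_apply]

lemma cornerSpace_map_vertex_le (a : V) :
    cornerSpace k (φ (vertex a)) (φ (vertex a)) ≤ k ∙ φ (vertex a) := by
  intro x hx
  obtain ⟨y, rfl⟩ := mem_cornerSpace_iff.mp hx
  rw [hφ.map_vertex_mul_mul_map_vertex htri]
  exact Submodule.smul_mem _ _ (Submodule.mem_span_singleton_self _)

lemma map_vertex_mul_mul_map_vertex_mul_eq_zero {a b : V} (hab : a ≠ b) (x y : A) :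
    φ (vertex a) * x * φ (vertex b) * (φ (vertex b) * y * φ (vertex a)) = 0 := by
  have key : φ (vertex a) * x * φ (vertex b) * (φ (vertex b) * y * φ (vertex a))
      = φ (vertex a) * (x * φ (vertex b) * φ (vertex b) * y) * φ (vertex a) := by
    simp only [mul_assoc]
  rw [key, hφ.map_vertex_mul_mul_map_vertex htri]
  simp [hφ.vertexChar_map_vertex, Pi.single_eq_of_ne hab]

end IsAdmissiblePresentation

section NilpotentKernel

variable {A B : Type} [Ring A] [Ring B] (χ : A →+* B)
  (hχ : ∀ x ∈ RingHom.ker χ, IsNilpotent x)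
include hχ

lemma exists_unit_mul_eq_mul_of_map_eq {g f : A} (hg : IsIdempotentElem g)
    (hf : IsIdempotentElem f) (h : χ g = χ f) : ∃ u : Aˣ, g * u = u * f := by
  set u := g * f + (1 - g) * (1 - f)
  have hu : IsUnit u := by
    have hχu : χ (u - 1) = 0 := by
      have hy : χ f * χ f = χ f := (hf.map χ).eq
      simp only [u, map_sub, map_add, map_mul, map_one, h, sub_mul, one_mul, mul_sub, mul_one, hy]
      abel
    simpa using (hχ _ hχu).isUnit_add_one
  refine ⟨hu.unit, ?_⟩
  calc g * hu.unit = g * f := by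
        simp only [IsUnit.unit_spec, u, mul_add, ← mul_assoc, mul_sub, mul_one, hg.eq, sub_self,
          zero_mul, add_zero]
    _ = hu.unit * f := by
        simp only [IsUnit.unit_spec, u, add_mul, mul_assoc, sub_mul, one_mul, hf.eq, sub_self,
          mul_zero, add_zero]

end NilpotentKernel

section PrimitiveIdempotents

variable {A ι K : Type} [Ring A] [Ring K] [IsDomain K] [DecidableEq ι] (χ : A →+* (ι → K))
  (hχ : ∀ x ∈ RingHom.ker χ, IsNilpotent x) {f : ι → A} (hχf : ∀ i, χ (f i) = Pi.single i 1)
include hχ hχf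

/-- If `χ g` had two nonzero coordinates, lifting one of them inside `g` would split `g`. -/
lemma IsPrimitiveIdempotent.exists_map_eq_single {g : A} (hg : IsPrimitiveIdempotent g) :
    ∃ c, χ g = Pi.single c 1 := by
  have h01 : ∀ i, χ g i = 0 ∨ χ g i = 1 := fun i =>
    IsIdempotentElem.iff_eq_zero_or_one.mp (congr_fun (hg.1.map χ).eq i)
  obtain ⟨c, hc⟩ : ∃ c, χ g c = 1 := by
    by_contra! h
    exact hg.2.1 (hg.1.eq_zero_of_isNilpotent
      (hχ g (funext fun i => (h01 i).resolve_right (h i))))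
  refine ⟨c, funext fun b => ?_⟩
  rcases eq_or_ne b c with rfl | hbc
  · simp [hc]
  rw [Pi.single_eq_of_ne hbc]
  refine (h01 b).resolve_right fun hb => ?_
  obtain ⟨p, hp, hχp, hpg, hgp⟩ := exists_isIdempotentElem_mul_eq_zero_of_ker_isNilpotent χ hχ
    (Pi.single c 1) ⟨f c, hχf c⟩ (by simp [IsIdempotentElem, ← Pi.single_mul]) (1 - g)
    hg.1.one_sub (by ext i; by_cases i = c <;> simp_all) (by ext i; by_cases i = c <;> simp_all)
  have hpg' : p * g = p := by simpa [mul_sub, sub_eq_zero, eq_comm] using hpg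
  have hgp' : g * p = p := by simpa [sub_mul, sub_eq_zero, eq_comm] using hgp
  rcases hg.2.2 p (g - p) hp
    (by simp [IsIdempotentElem, mul_sub, sub_mul, hg.1.eq, hpg', hgp', hp.eq])
    (by simp [mul_sub, hpg', hp.eq]) (by simp [sub_mul, hgp', hp.eq]) (add_sub_cancel p g)
    with h | h
  · simpa [h] using congr_fun hχp c
  · have := congr_fun (congr_arg χ h) b
    rw [map_sub, Pi.sub_apply, hb, hχp, Pi.single_eq_of_ne hbc, map_zero] at this
    simp at this

lemma IsPrimitiveIdempotent.exists_unit_mul_eq_mul (hf : ∀ i, IsIdempotentElem (f i)) {g : A}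
    (hg : IsPrimitiveIdempotent g) : ∃ c, ∃ u : Aˣ, g * u = u * f c := by
  obtain ⟨c, hc⟩ := hg.exists_map_eq_single χ hχ hχf
  exact ⟨c, exists_unit_mul_eq_mul_of_map_eq χ hχ hg.1 (hf c) (hc.trans (hχf c).symm)⟩

end PrimitiveIdempotents

section Bricks

variable {k A : Type} [Field k] [Ring A] [Algebra k A]

-- `A ⧸ brickRelations e w` is the module `A e / A w`.
def brickRelations (e w : A) : Submodule A A := Submodule.span A {w, 1 - e}

lemma one_sub_mem_brickRelations (e w : A) : 1 - e ∈ brickRelations e w :=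
  Submodule.subset_span (by simp)

lemma mem_brickRelations_self (e w : A) : w ∈ brickRelations e w :=
  Submodule.subset_span (by simp)

lemma exists_mul_eq_of_mem_brickRelations {e w x : A} (he : IsIdempotentElem e) (hw : w * e = w)
    (hx : x ∈ brickRelations e w) : ∃ r, x * e = r * w := by
  obtain ⟨r, s, rfl⟩ := Submodule.mem_span_pair.mp hx
  refine ⟨r, ?_⟩
  simp only [smul_eq_mul, add_mul, mul_assoc, hw, sub_mul, one_mul, he.eq, sub_self, mul_zero,
    add_zero]

variable {e ε : A}

lemma one_notMem_brickRelations (he : IsIdempotentElem e) (hε : IsIdempotentElem ε) (he0 : e ≠ 0)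
    (hεe : ∀ x y : A, e * x * ε * (ε * y * e) = 0) {w : A} (hw : w ∈ cornerSpace k ε e) :
    (1 : A) ∉ brickRelations e w := by
  intro h1
  obtain ⟨r, hr⟩ :=
    exists_mul_eq_of_mem_brickRelations he (mul_right_eq_of_mem_cornerSpace he hw) h1
  obtain ⟨y, rfl⟩ := mem_cornerSpace_iff.mp hw
  apply he0
  calc e = e * (1 * e) := by rw [one_mul, he.eq]
    _ = e * (r * ((ε * ε) * y * e)) := by rw [hr, hε.eq]
    _ = e * r * ε * (ε * y * e) := by simp only [mul_assoc]
    _ = 0 := hεe r y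

lemma exists_eq_smul_of_linearMap (hee : cornerSpace k e e ≤ k ∙ e) {w w' : A}
    (h : (A ⧸ brickRelations e w) →ₗ[A] (A ⧸ brickRelations e w')) :
    ∃ c : k, ∀ y : A, h (Submodule.Quotient.mk y) = Submodule.Quotient.mk (c • y) := by
  obtain ⟨x, hx⟩ := Submodule.Quotient.mk_surjective _ (h (Submodule.Quotient.mk 1))
  obtain ⟨c, hc⟩ := Submodule.mem_span_singleton.mp (hee (mem_cornerSpace_iff.mpr ⟨x, rfl⟩))
  have hmk : ∀ (w₀ y : A), (Submodule.Quotient.mk (y * e) : A ⧸ brickRelations e w₀)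
      = Submodule.Quotient.mk y := fun w₀ y => (Submodule.Quotient.eq _).mpr <| by
    simpa [mul_sub] using (brickRelations e w₀).neg_mem
      ((brickRelations e w₀).smul_mem y (one_sub_mem_brickRelations e w₀))
  refine ⟨c, fun y => ?_⟩
  calc h (Submodule.Quotient.mk y) = h ((y * e) • Submodule.Quotient.mk 1) := by
        rw [← Submodule.Quotient.mk_smul, smul_eq_mul, mul_one, hmk]
    _ = Submodule.Quotient.mk (y * (e * x * e)) := by
        rw [map_smul, ← hx, ← Submodule.Quotient.mk_smul, smul_eq_mul, ← hmk w' (y * e * x)]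
        simp only [mul_assoc]
    _ = Submodule.Quotient.mk (c • y) := by
        rw [← hc, mul_smul_comm, Submodule.Quotient.mk_smul, hmk, ← Submodule.Quotient.mk_smul]

variable (he : IsIdempotentElem e) (hε : IsIdempotentElem ε) (he0 : e ≠ 0)
  (hee : cornerSpace k e e ≤ k ∙ e) (hεε : cornerSpace k ε ε ≤ k ∙ ε)
  (hεe : ∀ x y : A, e * x * ε * (ε * y * e) = 0)
include he hε he0 hee hεe

lemma isBrick_quotient_brickRelations {w : A} (hw : w ∈ cornerSpace k ε e) :
    IsBrick A (ModuleCat.of A (A ⧸ brickRelations e w)) := by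
  refine ⟨inferInstance, ?_, fun f hf => ?_⟩
  · refine Submodule.Quotient.nontrivial_iff.mpr fun htop => ?_
    exact one_notMem_brickRelations he hε he0 hεe hw (htop ▸ Submodule.mem_top)
  · obtain ⟨c, hc⟩ := exists_eq_smul_of_linearMap hee f
    have hc0 : c ≠ 0 := by
      rintro rfl
      refine hf (LinearMap.ext fun m => ?_)
      obtain ⟨y, rfl⟩ := Submodule.Quotient.mk_surjective _ m
      simp [hc]
    refine Function.bijective_iff_has_inverse.mpr ⟨fun m => c⁻¹ • m, fun m => ?_, fun m => ?_⟩ <;>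
      obtain ⟨y, rfl⟩ := Submodule.Quotient.mk_surjective _ m <;>
      simp [hc, ← Submodule.Quotient.mk_smul, smul_smul, hc0]

include hεε in
lemma exists_eq_smul_of_linearEquiv {w w' : A} (hw : w ∈ cornerSpace k ε e)
    (hw' : w' ∈ cornerSpace k ε e) (g : (A ⧸ brickRelations e w) ≃ₗ[A] (A ⧸ brickRelations e w')) :
    ∃ c : k, w = c • w' := by
  obtain ⟨c, hc⟩ := exists_eq_smul_of_linearMap hee g.toLinearMap
  have hc0 : c ≠ 0 := by
    rintro rfl
    refine one_notMem_brickRelations he hε he0 hεe hw ((Submodule.Quotient.mk_eq_zero _).mp ?_)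
    exact g.injective (by simpa using hc 1)
  have hcw : c • w ∈ brickRelations e w' := by
    rw [← Submodule.Quotient.mk_eq_zero, ← hc,
      (Submodule.Quotient.mk_eq_zero _).mpr (mem_brickRelations_self e w), map_zero]
  obtain ⟨r, hr⟩ := exists_mul_eq_of_mem_brickRelations he (mul_right_eq_of_mem_cornerSpace he hw')
    (by simpa [smul_smul, hc0] using (brickRelations e w').smul_of_tower_mem c⁻¹ hcw)
  obtain ⟨c', hc'⟩ := Submodule.mem_span_singleton.mp (hεε (mem_cornerSpace_iff.mpr ⟨r, rfl⟩))
  refine ⟨c', ?_⟩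
  calc w = ε * (w * e) := by
        rw [mul_right_eq_of_mem_cornerSpace he hw, mul_left_eq_of_mem_cornerSpace hε hw]
    _ = ε * r * ε * w' := by
        rw [hr, mul_assoc (ε * r), mul_left_eq_of_mem_cornerSpace hε hw', mul_assoc]
    _ = c' • w' := by rw [← hc', smul_mul_assoc, mul_left_eq_of_mem_cornerSpace hε hw']

include hεε in
theorem not_isTauTiltingFinite_of_one_lt_finrank_cornerSpace [Infinite k]
    (h : 1 < Module.finrank k (cornerSpace k ε e)) : ¬ IsTauTiltingFinite A := by
  obtain ⟨u, hu, v, hv, huv⟩ := Submodule.exists_linearIndependent_pair_of_one_lt_finrank h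
  have hw : ∀ t : k, u - t • v ∈ cornerSpace k ε e :=
    fun t => sub_mem hu (Submodule.smul_mem _ t hv)
  rintro ⟨n, M, hM⟩
  choose F hF using fun t => hM _ (isBrick_quotient_brickRelations he hε he0 hee hεe (hw t))
  obtain ⟨s, t, hst, hFst⟩ := Finite.exists_ne_map_eq_of_infinite F
  obtain ⟨gs⟩ := hF s
  obtain ⟨gt⟩ := hF t
  rw [hFst] at gs
  obtain ⟨c, hc⟩ :=
    exists_eq_smul_of_linearEquiv he hε he0 hee hεε hεe (hw s) (hw t) (gs.trans gt.symm)
  obtain ⟨h1, h2⟩ := LinearIndependent.pair_iff.mp huv (1 - c) (c * t - s) (by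
    rw [sub_smul, one_smul, sub_smul, mul_smul, ← sub_eq_zero.mpr hc]
    module)
  apply hst
  linear_combination -h2 - t * h1

end Bricks

theorem stmt14_general (k A : Type) [Field k] [IsAlgClosed k] [Ring A] [Algebra k A]
    (hsc : IsSimplyConnectedAlg k A)
    (hns : ¬ IsSchurian k A) : ¬ IsTauTiltingFinite A := by
  obtain ⟨⟨n, Q, φ, hφ⟩, hπ₁⟩ := hsc
  have hacyclic := (hπ₁ n Q φ hφ).1
  simp only [IsSchurian, not_forall, not_le] at hns
  obtain ⟨ι, _, e, he, i, j, hij⟩ := hns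
  have hidem a := (PathAlgebra.isIdempotentElem_vertex (k := k) a).map φ
  have hconj l := (he.1 l).exists_unit_mul_eq_mul hφ.vertexChar.toRingHom
    hφ.isNilpotent_of_mem_ker_vertexChar hφ.vertexChar_map_vertex hidem
  obtain ⟨c, u, hu⟩ := hconj i
  obtain ⟨d, v, hv⟩ := hconj j
  rw [finrank_cornerSpace_eq_of_mul_eq_mul hu hv] at hij
  have hcd : c ≠ d := by
    rintro rfl
    have := (Submodule.finrank_mono (hφ.cornerSpace_map_vertex_le hacyclic c)).trans
      (finrank_span_singleton (hφ.map_vertex_ne_zero c)).le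
    omega
  exact not_isTauTiltingFinite_of_one_lt_finrank_cornerSpace (hidem d) (hidem c)
    (hφ.map_vertex_ne_zero d) (hφ.cornerSpace_map_vertex_le hacyclic d)
    (hφ.cornerSpace_map_vertex_le hacyclic c)
    (hφ.map_vertex_mul_mul_map_vertex_mul_eq_zero hacyclic hcd.symm) hij

/-- A simply connected algebra which is not Schurian is τ-tilting infinite. -/
theorem stmt14 (k A : Type) [Field k] [IsAlgClosed k] [Ring A] [Algebra k A]
    [FiniteDimensional k A] (hsc : IsSimplyConnectedAlg k A)
    (hns : ¬ IsSchurian k A) : ¬ IsTauTiltingFinite A :=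
  stmt14_general k A hsc hns
end

section
/- Let B be a finite-dimensional k-algebra and suppose B is local. Then A ⊗_k B is τ-tilting finite if and only if A is τ-tilting finite, for any finite-dimensional k-algebra A. -/
/-- A (possibly noncommutative) ring is local if it is nontrivial and for
every element `b`, either `b` or `1 - b` is a unit. -/
def IsLocalAlgebra (B : Type) [Ring B] : Prop :=
  Nontrivial B ∧ ∀ b : B, IsUnit b ∨ IsUnit (1 - b)

/-!
Since `k` is algebraically closed and `B` is local, `B / rad B ≅ k`, which gives a character
`χ : B → k` whose kernel `rad B` is nilpotent. Let `M` be a brick over `A ⊗ B`. If `(ker χ)^(t+1)`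
kills `M` and `j ∈ (ker χ)^t` with `t ≥ 1`, then `1 ⊗ j` acts on `M` by an `A ⊗ B`-linear map,
because every commutator `[j, b] = [j, b - χ b]` lies in `(ker χ)^(t+1)`, and this map squares to
zero, so it vanishes since `M` is a brick. By downward induction on `t`, `1 ⊗ ker χ` kills `M`,
so `A ⊗ B` acts on `M` through `id ⊗ χ : A ⊗ B → A`. Restriction of scalars along `id ⊗ χ` and
along `A → A ⊗ B` is therefore a bijection between the isoclasses of bricks on both sides.
-/

open scoped TensorProduct

section Transfer

variable {R S : Type} [Ring R] [Ring S]

theorem isBrick_restrictScalars (φ : R →+* S) {M : ModuleCat.{0} S}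
    (hφ : ∀ s : S, ∃ r : R, ∀ m : M, s • m = φ r • m) (hM : IsBrick S M) :
    IsBrick R ((ModuleCat.restrictScalars φ).obj M) := by
  let M' := (ModuleCat.restrictScalars φ).obj M
  have hφ' : ∀ s : S, ∃ r : R, ∀ m : M', s • m = r • m := hφ
  obtain ⟨hfin, hnt, hend⟩ := hM
  have hfin' : Module.Finite S M' := hfin
  have hend' : ∀ f : M' →ₗ[S] M', f ≠ 0 → Function.Bijective f := hend
  refine ⟨?_, hnt, fun f hf => hend' ⟨f.toAddHom, fun s m => ?_⟩ fun h => hf ?_⟩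
  · obtain ⟨t, htfin, ht⟩ := Submodule.fg_def.1 hfin'.fg_top
    refine ⟨Submodule.fg_def.2 ⟨t, htfin, Submodule.eq_top_iff'.2 fun m => ?_⟩⟩
    have hm : m ∈ Submodule.span S t := ht ▸ Submodule.mem_top
    induction hm using Submodule.span_induction with
    | mem x hx => exact Submodule.subset_span hx
    | zero => exact zero_mem _
    | add x y _ _ hx hy => exact add_mem hx hy
    | smul a x _ hx =>
      obtain ⟨r, hr⟩ := hφ' a
      rw [hr]
      exact Submodule.smul_mem _ r hx
  · obtain ⟨r, hr⟩ := hφ' s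
    rw [RingHom.id_apply, hr, hr]
    exact f.map_smul r m
  · ext m
    exact LinearMap.congr_fun h m

def linearEquivRestrictScalarsRestrictScalars (f : R →+* S) (g : S →+* R) (M : ModuleCat.{0} R)
    (h : ∀ (x : R) (m : M), x • m = g (f x) • m) :
    M ≃ₗ[R] (ModuleCat.restrictScalars f).obj ((ModuleCat.restrictScalars g).obj M) where
  toFun m := m
  invFun m := m
  map_add' _ _ := rfl
  map_smul' := h
  left_inv _ := rfl
  right_inv _ := rfl

theorem IsTauTiltingFinite.of_restrictScalars (φ : R →+* S)
    (h : ∀ N : ModuleCat.{0} R, IsBrick R N → ∃ N' : ModuleCat.{0} S,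
      IsBrick S N' ∧ Nonempty (N ≃ₗ[R] (ModuleCat.restrictScalars φ).obj N'))
    (hS : IsTauTiltingFinite S) : IsTauTiltingFinite R := by
  obtain ⟨n, M, hM⟩ := hS
  refine ⟨n, fun i => (ModuleCat.restrictScalars φ).obj (M i), fun N hN => ?_⟩
  obtain ⟨N', hN', ⟨e⟩⟩ := h N hN
  obtain ⟨i, ⟨e'⟩⟩ := hM N' hN'
  exact ⟨i, ⟨e.trans ((ModuleCat.restrictScalars φ).mapIso e'.toModuleIso).toLinearEquiv⟩⟩

theorem isTauTiltingFinite_iff_of_leftInverse (f : R →+* S) (g : S →+* R)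
    (hfg : Function.LeftInverse f g)
    (h : ∀ M : ModuleCat.{0} R, IsBrick R M → ∀ (x : R) (m : M), x • m = g (f x) • m) :
    IsTauTiltingFinite R ↔ IsTauTiltingFinite S := by
  refine ⟨IsTauTiltingFinite.of_restrictScalars g fun N hN => ?_,
    IsTauTiltingFinite.of_restrictScalars f fun N hN => ?_⟩
  · refine ⟨(ModuleCat.restrictScalars f).obj N,
      isBrick_restrictScalars f (fun s => ⟨g s, fun m => by rw [hfg]⟩) hN,
      ⟨linearEquivRestrictScalarsRestrictScalars g f N fun s m => by rw [hfg]⟩⟩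
  · exact ⟨(ModuleCat.restrictScalars g).obj N,
      isBrick_restrictScalars g (fun x => ⟨f x, h N hN x⟩) hN,
      ⟨linearEquivRestrictScalarsRestrictScalars f g N (h N hN)⟩⟩

end Transfer

theorem IsBrick.smul_eq_zero_of_smul_smul_eq_zero {R : Type} [Ring R] {M : ModuleCat.{0} R}
    (hM : IsBrick R M) (r : R) (hcomm : ∀ (x : R) (m : M), r • x • m = x • r • m)
    (hsq : ∀ m : M, r • r • m = 0) (m : M) : r • m = 0 := by
  let φ : M →ₗ[R] M := { toFun := (r • ·), map_add' := smul_add r, map_smul' := hcomm }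
  by_contra hm
  have hφ : φ ≠ 0 := fun h => hm (LinearMap.congr_fun h m)
  exact hm ((hM.2.2 φ hφ).injective (by simp [φ, hsq m]))

section TensorProduct

variable {k A B : Type} [CommRing k] [Ring A] [Algebra k A] [Ring B] [Algebra k B]

theorem one_tmul_smul_smul_comm {M : Type} [AddCommGroup M] [Module (A ⊗[k] B) M] {j : B}
    (hj : ∀ (b : B) (m : M), ((1 : A) ⊗ₜ[k] (j * b - b * j)) • m = 0)
    (x : A ⊗[k] B) (m : M) : ((1 : A) ⊗ₜ[k] j) • x • m = x • ((1 : A) ⊗ₜ[k] j) • m := by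
  induction x using TensorProduct.induction_on with
  | zero => simp
  | add x y hx hy => rw [add_smul, add_smul, smul_add, hx, hy]
  | tmul a b =>
    have key : a ⊗ₜ[k] (j * b - b * j) = (a ⊗ₜ[k] (1 : B)) * ((1 : A) ⊗ₜ[k] (j * b - b * j)) := by
      simp
    rw [← sub_eq_zero, ← mul_smul, ← mul_smul, ← sub_smul, Algebra.TensorProduct.tmul_mul_tmul,
      Algebra.TensorProduct.tmul_mul_tmul, one_mul, mul_one, ← TensorProduct.tmul_sub, key,
      mul_smul, hj, smul_zero]

variable (χ : B →ₐ[k] k)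

theorem mul_sub_mul_mem_ker_pow_succ {t : ℕ} {j : B} (hj : j ∈ RingHom.ker χ ^ t) (b : B) :
    j * b - b * j ∈ RingHom.ker χ ^ (t + 1) := by
  have hb : b - algebraMap k B (χ b) ∈ RingHom.ker χ := by simp
  have key : j * b - b * j = j * (b - algebraMap k B (χ b)) - (b - algebraMap k B (χ b)) * j := by
    rw [mul_sub, sub_mul, Algebra.commutes]
    abel
  rw [key]
  refine sub_mem ?_ ?_
  · rw [Ideal.IsTwoSided.pow_add, Submodule.pow_one]
    exact Ideal.mul_mem_mul hj hb
  · rw [Ideal.IsTwoSided.pow_succ]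
    exact Ideal.mul_mem_mul hb hj

theorem IsBrick.one_tmul_smul_eq_zero_of_ker_pow_succ {M : ModuleCat.{0} (A ⊗[k] B)}
    (hM : IsBrick (A ⊗[k] B) M) {t : ℕ} (ht : t ≠ 0)
    (h : ∀ j ∈ RingHom.ker χ ^ (t + 1), ∀ m : M, ((1 : A) ⊗ₜ[k] j) • m = 0) :
    ∀ j ∈ RingHom.ker χ ^ t, ∀ m : M, ((1 : A) ⊗ₜ[k] j) • m = 0 := by
  intro j hj
  refine hM.smul_eq_zero_of_smul_smul_eq_zero _
    (one_tmul_smul_smul_comm fun b => h _ (mul_sub_mul_mem_ker_pow_succ χ hj b)) fun m => ?_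
  rw [← mul_smul, Algebra.TensorProduct.tmul_mul_tmul, one_mul]
  refine h _ ?_ m
  rw [Ideal.IsTwoSided.pow_succ]
  exact Ideal.mul_mem_mul (Ideal.pow_le_self ht hj) hj

theorem IsBrick.one_tmul_smul_eq_zero (hχ : IsNilpotent (RingHom.ker χ))
    {M : ModuleCat.{0} (A ⊗[k] B)} (hM : IsBrick (A ⊗[k] B) M) {j : B} (hj : j ∈ RingHom.ker χ)
    (m : M) : ((1 : A) ⊗ₜ[k] j) • m = 0 := by
  obtain ⟨n, hn⟩ := hχ
  suffices ∀ s t, n ≤ t + s → t ≠ 0 →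
      ∀ j ∈ RingHom.ker χ ^ t, ∀ m : M, ((1 : A) ⊗ₜ[k] j) • m = 0 from
    this n 1 (by omega) one_ne_zero j (by rwa [Submodule.pow_one]) m
  intro s
  induction s with
  | zero =>
    intro t hnt _ j hj m
    have : j = 0 := (Ideal.pow_le_pow_right hnt).trans (le_of_eq hn) hj
    rw [this, TensorProduct.tmul_zero, zero_smul]
  | succ s ih =>
    intro t hnt ht
    exact hM.one_tmul_smul_eq_zero_of_ker_pow_succ χ ht (ih (t + 1) (by omega) (by omega))

variable (A) in
noncomputable def projOfCharacter : A ⊗[k] B →ₐ[k] A :=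
  (Algebra.TensorProduct.rid k k A).toAlgHom.comp (Algebra.TensorProduct.map (AlgHom.id k A) χ)

@[simp]
theorem projOfCharacter_tmul (a : A) (b : B) : projOfCharacter A χ (a ⊗ₜ[k] b) = χ b • a := by
  simp [projOfCharacter]

theorem IsBrick.smul_eq_includeLeft_projOfCharacter_smul (hχ : IsNilpotent (RingHom.ker χ))
    {M : ModuleCat.{0} (A ⊗[k] B)} (hM : IsBrick (A ⊗[k] B) M) (x : A ⊗[k] B) (m : M) :
    x • m = (Algebra.TensorProduct.includeLeft : A →ₐ[k] A ⊗[k] B) (projOfCharacter A χ x) • m := by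
  induction x using TensorProduct.induction_on with
  | zero => simp
  | add x y hx hy => rw [add_smul, hx, hy, map_add, map_add, add_smul]
  | tmul a b =>
    have hb : b - algebraMap k B (χ b) ∈ RingHom.ker χ := by simp
    have key : a ⊗ₜ[k] b = (χ b • a) ⊗ₜ[k] (1 : B)
        + (a ⊗ₜ[k] (1 : B)) * ((1 : A) ⊗ₜ[k] (b - algebraMap k B (χ b))) := by
      rw [Algebra.TensorProduct.tmul_mul_tmul, mul_one, one_mul, TensorProduct.tmul_sub,
        Algebra.algebraMap_eq_smul_one, TensorProduct.tmul_smul, TensorProduct.smul_tmul']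
      abel
    rw [projOfCharacter_tmul, Algebra.TensorProduct.includeLeft_apply, key, add_smul, mul_smul,
      hM.one_tmul_smul_eq_zero χ hχ hb, smul_zero, add_zero]

theorem isTauTiltingFinite_tensorProduct_iff_of_isNilpotent_ker
    (hχ : IsNilpotent (RingHom.ker χ)) :
    IsTauTiltingFinite (A ⊗[k] B) ↔ IsTauTiltingFinite A :=
  isTauTiltingFinite_iff_of_leftInverse (projOfCharacter A χ).toRingHom
    Algebra.TensorProduct.includeLeftRingHom (fun a => by simp)
    fun _ hM => hM.smul_eq_includeLeft_projOfCharacter_smul χ hχ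

end TensorProduct

theorem IsLocalAlgebra.mem_jacobson_of_not_isUnit {B : Type} [Ring B] [IsDedekindFiniteMonoid B]
    (hB : IsLocalAlgebra B) {x : B} (hx : ¬IsUnit x) : x ∈ Ring.jacobson B := by
  rw [← Ideal.jacobson_bot, Ideal.mem_jacobson_iff]
  intro y
  have hyx : ¬IsUnit (-(y * x)) := fun h =>
    hx (isUnit_of_mul_isUnit_right ((IsUnit.neg_iff _).1 h))
  obtain ⟨u, hu⟩ := (hB.2 _).resolve_left hyx
  refine ⟨↑u⁻¹, (Ideal.mem_bot).2 ?_⟩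
  calc (↑u⁻¹ : B) * y * x + ↑u⁻¹ - 1 = ↑u⁻¹ * (1 - -(y * x)) - 1 := by noncomm_ring
    _ = 0 := by rw [← hu, Units.inv_mul, sub_self]

section LocalAlgebra

variable {k B : Type} [Field k] [IsAlgClosed k] [Ring B] [Algebra k B] [FiniteDimensional k B]

theorem IsLocalAlgebra.algebraMap_quotient_jacobson_surjective (hB : IsLocalAlgebra B) :
    Function.Surjective (algebraMap k (B ⧸ Ring.jacobson B)) := by
  have := hB.1
  have : IsArtinianRing B := .of_finite k B
  intro q
  obtain ⟨b, rfl⟩ := Ideal.Quotient.mk_surjective q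
  obtain ⟨c, hc⟩ := spectrum.nonempty_of_isAlgClosed_of_finiteDimensional k b
  exact ⟨c, Ideal.Quotient.eq.2 (hB.mem_jacobson_of_not_isUnit hc)⟩

theorem IsLocalAlgebra.exists_algHom_isNilpotent_ker (hB : IsLocalAlgebra B) :
    ∃ χ : B →ₐ[k] k, IsNilpotent (RingHom.ker χ) := by
  have := hB.1
  have : IsArtinianRing B := .of_finite k B
  have : Nontrivial (B ⧸ Ring.jacobson B) :=
    Ideal.Quotient.nontrivial_iff.2 (Ring.jacobson_lt_top B).ne
  let e : k ≃ₐ[k] B ⧸ Ring.jacobson B := AlgEquiv.ofBijective (Algebra.ofId k _)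
    ⟨(algebraMap k _).injective, hB.algebraMap_quotient_jacobson_surjective⟩
  refine ⟨e.symm.toAlgHom.comp (Ideal.Quotient.mkₐ k _), ?_⟩
  convert IsSemiprimaryRing.isNilpotent (R := B)
  ext x
  simp [Ideal.Quotient.eq_zero_iff_mem]

end LocalAlgebra

theorem stmt17_general (k A B : Type) [Field k] [IsAlgClosed k]
    [Ring A] [Algebra k A]
    [Ring B] [Algebra k B] [FiniteDimensional k B]
    (hB : IsLocalAlgebra B) :
    IsTauTiltingFinite (TensorProduct k A B) ↔ IsTauTiltingFinite A := by
  obtain ⟨χ, hχ⟩ := hB.exists_algHom_isNilpotent_ker (k := k)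
  exact isTauTiltingFinite_tensorProduct_iff_of_isNilpotent_ker χ hχ

theorem stmt17 (k A B : Type) [Field k] [IsAlgClosed k]
    [Ring A] [Algebra k A] [FiniteDimensional k A]
    [Ring B] [Algebra k B] [FiniteDimensional k B]
    (hB : IsLocalAlgebra B) :
    IsTauTiltingFinite (TensorProduct k A B) ↔ IsTauTiltingFinite A :=
  stmt17_general k A B hB
end
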